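/- arXiv:2504.21584 — 6 statements merged into one kernel-verified Lean document; each statement's English description precedes it below -/
import Mathlib

section
/- Let S be a complete separable metric space. The map μ ↦ μ^∞ from M₁(S), the space of Borel probability measures on S, to M₁(S^ℕ), sending a probability measure to the corresponding infinite product (i.i.d.) measure, is measurable with respect to the σ-algebras generated by the evaluation maps ν ↦ ν(B). -/
open MeasureTheory ProbabilityTheory TopologicalSpace

noncomputable section

/-- `π` is the infinite product (i.i.d.) measure on `ℕ → X` with all factors `ν`. -/
def IsIIDProduct {X : Type*} [MeasurableSpace X] (ν : Measure X) (π : Measure (ℕ → X)) : Prop :=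
  IsProbabilityMeasure π ∧
    ∀ (n : ℕ) (A : Fin n → Set X), (∀ i, MeasurableSet (A i)) →
      π {x | ∀ i : Fin n, x (i : ℕ) ∈ A i} = ∏ i : Fin n, ν (A i)

/-! An i.i.d. product is a probability measure, so by Dynkin's π-λ theorem it suffices to check
measurability of `a ↦ π a C` on square cylinders `C`; these are boxes on an initial segment
`{0, …, n-1}`, where `π a C` is a finite product of the measurable maps `a ↦ ν a (A i)`. -/

lemma Finset.pi_eq_setOf_forall_fin {X : Type*} (s : Finset ℕ) (t : ℕ → Set X) {n : ℕ}
    (hn : ∀ i ∈ s, i < n) :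
    (s : Set ℕ).pi t = {x | ∀ i : Fin n, x i ∈ if (i : ℕ) ∈ s then t i else Set.univ} := by
  ext x
  simp only [Set.mem_pi, Finset.mem_coe, Set.mem_ofPred_eq]
  refine ⟨fun hx i => ?_, fun hx i hi => by simpa [hi] using hx ⟨i, hn i hi⟩⟩
  split_ifs with hi
  exacts [hx i hi, trivial]

theorem Measurable.of_isIIDProduct {α X : Type*} [MeasurableSpace α] [MeasurableSpace X]
    {ν : α → Measure X} {π : α → Measure (ℕ → X)} (hν : Measurable ν)
    (hπ : ∀ a, IsIIDProduct (ν a) (π a)) : Measurable π := by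
  have := fun a => (hπ a).1
  refine .measure_of_isPiSystem_of_isProbabilityMeasure generateFrom_squareCylinders.symm
    (isPiSystem_squareCylinders (fun _ => MeasurableSpace.isPiSystem_measurableSet)
      fun _ => MeasurableSet.univ) ?_
  rintro _ ⟨s, t, ht, rfl⟩
  have ht : ∀ i, MeasurableSet (t i) := fun i => ht i trivial
  obtain ⟨n, hn⟩ : ∃ n, ∀ i ∈ s, i < n := ⟨s.sup id + 1, fun i hi =>
    Nat.lt_succ_of_le (Finset.le_sup (f := id) hi)⟩
  have hA : ∀ i : Fin n, MeasurableSet (if (i : ℕ) ∈ s then t i else Set.univ) := fun i => by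
    split_ifs
    exacts [ht i, .univ]
  simp_rw [Finset.pi_eq_setOf_forall_fin s t hn, fun a => (hπ a).2 n _ hA]
  exact Finset.measurable_prod _ fun i _ => (Measure.measurable_coe (hA i)).comp hν

theorem stmt3_general {S : Type*} [MeasurableSpace S]
    (iidProd : {μ : Measure S // IsProbabilityMeasure μ} → Measure (ℕ → S))
    (hiid : ∀ μ, IsIIDProduct μ.1 (iidProd μ)) :
    Measurable iidProd :=
  measurable_subtype_coe.of_isIIDProduct hiid

/-- The map `μ ↦ μ^∞` from probability measures on `S` (with the σ-algebra generated by
evaluations) to measures on `S^ℕ` is measurable. -/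
theorem stmt3 {S : Type*} [MetricSpace S] [CompleteSpace S] [SeparableSpace S]
    [MeasurableSpace S] [BorelSpace S]
    (iidProd : {μ : Measure S // IsProbabilityMeasure μ} → Measure (ℕ → S))
    (hiid : ∀ μ, IsIIDProduct μ.1 (iidProd μ)) :
    Measurable iidProd :=
  stmt3_general iidProd hiid
end
end

section
/- Let S be a complete separable metric space and ξ = (ξ_i) an exchangeable sequence of S-valued random variables with directing random measure μ (the a.s.-unique random probability measure with P(ξ ∈ A | μ) = μ^∞(A) a.s.). Then with probability one, the empirical measures μ_n = n⁻¹ ∑_{i=1}^n δ_{ξ_i} converge weakly to μ, i.e. converge in the Prohorov metric on M₁(S). -/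
open MeasureTheory ProbabilityTheory TopologicalSpace Filter Topology ENNReal

noncomputable section

/-!
Under the i.i.d. law `ν^∞`, the frequencies `n⁻¹ #{i < n | x i ∈ U}` of a measurable set `U`
converge to `ν U` almost surely, by the strong law of large numbers. The identity
`P(ξ ∈ A | μ) = μ^∞(A)` transfers this to `ξ`: the limit `μ(U)` depends on `ω`, but for each
rational `q` the event `{q < μ(U)} ∩ {frequencies not eventually > q}` has the form
`{μ ∈ C} ∩ {ξ ∈ A}`, and its probability is `∫_{μ ∈ C} μ^∞(A) dP = 0`; likewise with `<`.
Doing this at once for the sets of a countable π-system of open sets containing arbitrarily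
small neighbourhoods of every point, the portmanteau theorem gives weak convergence.
-/

namespace IsIIDProduct

variable {X : Type*} [MeasurableSpace X] {ν : Measure X} {π : Measure (ℕ → X)}

theorem isProbabilityMeasure_left (h : IsIIDProduct ν π) : IsProbabilityMeasure ν := by
  have h1 := h.2 1 (fun _ => Set.univ) fun _ => MeasurableSet.univ
  have := h.1
  simp only [Set.mem_univ, implies_true, Set.ofPred_true, measure_univ,
    Finset.univ_unique, Finset.prod_singleton] at h1
  exact ⟨h1.symm⟩

theorem eq_infinitePi [IsProbabilityMeasure ν] (h : IsIIDProduct ν π) :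
    π = Measure.infinitePi fun _ => ν := by
  classical
  refine Measure.eq_infinitePi _ fun s t ht => ?_
  set n := s.sup id + 1
  have hs : s ⊆ Finset.range n := fun i hi =>
    Finset.mem_range.2 (Nat.lt_succ_of_le (Finset.le_sup (f := id) hi))
  have hbox : Set.pi (s : Set ℕ) t =
      {x | ∀ i : Fin n, x i ∈ if (i : ℕ) ∈ s then t i else Set.univ} := by
    ext x
    simp only [Set.mem_pi, Finset.mem_coe, Set.mem_ofPred_eq]
    refine ⟨fun hx i => ?_, fun hx i hi => ?_⟩
    · split_ifs with hi
      · exact hx i hi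
      · trivial
    · simpa [hi] using hx ⟨i, Finset.mem_range.1 (hs hi)⟩
  rw [hbox, h.2 n _ fun i => by split_ifs <;> simp [ht],
    Fin.prod_univ_eq_prod_range (fun i => ν (if i ∈ s then t i else Set.univ))]
  simp only [apply_ite ν, measure_univ, Finset.prod_ite_mem, Finset.inter_eq_right.2 hs]

end IsIIDProduct

theorem ae_tendsto_sum_div_infinitePi {X : Type*} [MeasurableSpace X] (ν : Measure X)
    [IsProbabilityMeasure ν] {f : X → ℝ} (hf : Integrable f ν) :
    ∀ᵐ x ∂Measure.infinitePi (fun _ : ℕ => ν),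
      Tendsto (fun n : ℕ => (∑ i ∈ Finset.range n, f (x i)) / n) atTop (𝓝 (∫ a, f a ∂ν)) := by
  have heval (i : ℕ) := measurePreserving_eval_infinitePi (fun _ : ℕ => ν) i
  have hf' : AEMeasurable f ν := hf.aemeasurable
  have hindep : Pairwise fun i j => IndepFun (fun x : ℕ → X => f (x i)) (fun x => f (x j))
      (Measure.infinitePi fun _ => ν) := fun i j hij =>
    ((iIndepFun_infinitePi (P := fun _ : ℕ => ν) (X := fun _ x => x)
      fun _ => measurable_id).indepFun hij).comp₀ (heval i).aemeasurable (heval j).aemeasurable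
        (by rwa [Measure.infinitePi_map_eval]) (by rwa [Measure.infinitePi_map_eval])
  have hident (i : ℕ) : IdentDistrib (fun x : ℕ → X => f (x i)) (fun x => f (x 0))
      (Measure.infinitePi fun _ => ν) (Measure.infinitePi fun _ => ν) :=
    ((heval i).hasLaw.identDistrib (heval 0).hasLaw).comp_of_aemeasurable
      (by rwa [(heval i).map_eq])
  have hmean : ∫ x, f (x 0) ∂Measure.infinitePi (fun _ => ν) = ∫ a, f a ∂ν := calc
    _ = ∫ a, f a ∂(Measure.infinitePi (fun _ => ν)).map (Function.eval 0) :=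
      (integral_map (heval 0).aemeasurable (by rw [(heval 0).map_eq]; exact hf.1)).symm
    _ = ∫ a, f a ∂ν := by rw [(heval 0).map_eq]
  simpa [hmean] using strong_law_ae_real (fun i (x : ℕ → X) => f (x i))
    ((heval 0).integrable_comp_of_integrable hf) hindep hident

def IsCondLaw {Ω β Y : Type*} [MeasurableSpace Ω] [MeasurableSpace β] [MeasurableSpace Y]
    (P : Measure Ω) (T : Ω → Y) (μ : Ω → β) (κ : Ω → Measure Y) : Prop :=
  ∀ A : Set Y, MeasurableSet A →
    P[(A.indicator fun _ => (1:ℝ)) ∘ T | MeasurableSpace.comap μ inferInstance]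
      =ᵐ[P] fun ω => (κ ω A).toReal

namespace IsCondLaw

variable {Ω β Y : Type*} [MeasurableSpace Ω] [MeasurableSpace β] [MeasurableSpace Y]
  {P : Measure Ω} [IsFiniteMeasure P] {T : Ω → Y} {μ : Ω → β} {κ : Ω → Measure Y}

theorem ae_mem (hcond : IsCondLaw P T μ κ) (hT : Measurable T) (hμ : Measurable μ)
    {A : Set Y} (hA : MeasurableSet A) {C : Set β} (hC : MeasurableSet C)
    (h : ∀ ω, μ ω ∈ C → ∀ᵐ y ∂κ ω, y ∈ A) :
    ∀ᵐ ω ∂P, μ ω ∈ C → T ω ∈ A := by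
  have hTA : MeasurableSet (T ⁻¹' Aᶜ) := hT hA.compl
  have hind : (Aᶜ.indicator fun _ => (1:ℝ)) ∘ T = (T ⁻¹' Aᶜ).indicator fun _ => 1 :=
    funext fun _ => (Set.indicator_comp_right T).symm
  have hbad : P.real (μ ⁻¹' C ∩ T ⁻¹' Aᶜ) = 0 := calc
    _ = ∫ ω in μ ⁻¹' C, ((Aᶜ.indicator fun _ => (1:ℝ)) ∘ T) ω ∂P := by
      rw [hind, setIntegral_indicator hTA, setIntegral_const, smul_eq_mul, mul_one]
    _ = ∫ ω in μ ⁻¹' C, (κ ω Aᶜ).toReal ∂P := by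
      rw [← setIntegral_condExp hμ.comap_le
        ((integrable_indicator_iff hTA).2 (integrableOn_const (measure_ne_top _ _)))
        ⟨C, hC, rfl⟩]
      exact setIntegral_congr_ae (hμ hC) ((hcond _ hA.compl).mono fun ω h _ => h)
    _ = 0 := setIntegral_eq_zero_of_forall_eq_zero fun ω hω => by
      rw [show κ ω Aᶜ = 0 from ae_iff.1 (h ω hω), ENNReal.toReal_zero]
  exact ae_iff.2 <| measure_mono_null (fun ω hω => Classical.not_imp.1 hω)
    ((measureReal_eq_zero_iff (measure_ne_top _ _)).1 hbad)

theorem ae_tendsto (hcond : IsCondLaw P T μ κ) (hT : Measurable T) (hμ : Measurable μ)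
    {f : ℕ → Y → ℝ} (hf : ∀ n, Measurable (f n)) {g : β → ℝ} (hg : Measurable g)
    (h : ∀ ω, ∀ᵐ y ∂κ ω, Tendsto (fun n => f n y) atTop (𝓝 (g (μ ω)))) :
    ∀ᵐ ω ∂P, Tendsto (fun n => f n (T ω)) atTop (𝓝 (g (μ ω))) := by
  have hev {p : ℝ → Prop} (hp : MeasurableSet {x | p x}) :
      MeasurableSet {y | ∀ᶠ n in atTop, p (f n y)} := by
    convert MeasurableSet.measurableSet_liminf fun n => (hf n) hp using 1
    ext y
    exact (mem_liminf_iff_eventually_mem (s := fun n => f n ⁻¹' {x | p x})).symm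
  have hq (q : ℚ) : ∀ᵐ ω ∂P, (q < g (μ ω) → ∀ᶠ n in atTop, q < f n (T ω)) ∧
      (g (μ ω) < q → ∀ᶠ n in atTop, f n (T ω) < q) :=
    (hcond.ae_mem hT hμ (hev measurableSet_Ioi) (measurableSet_lt measurable_const hg)
      fun ω hω => (h ω).mono fun y hy => hy.eventually (lt_mem_nhds hω)).and
    (hcond.ae_mem hT hμ (hev measurableSet_Iio) (measurableSet_lt hg measurable_const)
      fun ω hω => (h ω).mono fun y hy => hy.eventually (gt_mem_nhds hω))
  filter_upwards [ae_all_iff.2 hq] with ω hω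
  refine tendsto_order.2 ⟨fun a ha => ?_, fun a ha => ?_⟩
  · obtain ⟨q, haq, hqg⟩ := exists_rat_btwn ha
    exact ((hω q).1 hqg).mono fun n hn => haq.trans hn
  · obtain ⟨q, hgq, hqa⟩ := exists_rat_btwn ha
    exact ((hω q).2 hgq).mono fun n hn => hn.trans hqa

end IsCondLaw

theorem ae_tendsto_frequency_of_isCondLaw_isIIDProduct {Ω S : Type*} [MeasurableSpace Ω]
    [MeasurableSpace S] {P : Measure Ω} [IsFiniteMeasure P]
    {ξ : ℕ → Ω → S} (hξ : ∀ i, Measurable (ξ i)) {μ : Ω → Measure S} (hμ : Measurable μ)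
    {μInf : Ω → Measure (ℕ → S)} (hμInf : ∀ ω, IsIIDProduct (μ ω) (μInf ω))
    (hcond : IsCondLaw P (fun ω i => ξ i ω) μ μInf) {U : Set S} (hU : MeasurableSet U) :
    ∀ᵐ ω ∂P, Tendsto (fun n : ℕ => (∑ i ∈ Finset.range n, U.indicator (fun _ => (1:ℝ)) (ξ i ω)) / n)
      atTop (𝓝 ((μ ω).real U)) := by
  refine hcond.ae_tendsto (measurable_pi_lambda _ hξ) hμ
    (f := fun n x => (∑ i ∈ Finset.range n, U.indicator (fun _ => (1:ℝ)) (x i)) / n)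
    (g := fun ν => ν.real U) (fun n => ?_) (Measure.measurable_coe hU).ennreal_toReal
    fun ω => ?_
  · exact (Finset.measurable_sum _ fun i _ =>
      (measurable_const.indicator hU).comp (measurable_pi_apply i)).div_const _
  · have := (hμInf ω).isProbabilityMeasure_left
    rw [(hμInf ω).eq_infinitePi]
    simpa [integral_indicator hU] using ae_tendsto_sum_div_infinitePi (μ ω)
      ((integrable_const (1:ℝ)).indicator hU)

theorem measureReal_smul_sum_dirac {X : Type*} [MeasurableSpace X] (x : ℕ → X) (N : ℕ)
    {U : Set X} (hU : MeasurableSet U) :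
    (((N : ℝ≥0∞)⁻¹ • ∑ i ∈ Finset.range N, Measure.dirac (x i) : Measure X)).real U
      = (∑ i ∈ Finset.range N, U.indicator (fun _ => (1:ℝ)) (x i)) / N := by
  rw [measureReal_def, Measure.smul_apply, Measure.finsetSum_apply, smul_eq_mul, toReal_mul,
    toReal_inv, toReal_natCast, ENNReal.toReal_sum fun i _ => measure_ne_top _ _,
    div_eq_inv_mul]
  congr 1
  refine Finset.sum_congr rfl fun i _ => ?_
  by_cases hi : x i ∈ U <;> simp [hi, hU]

theorem exists_countable_isPiSystem_isOpen_nhds (X : Type*) [TopologicalSpace X]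
    [SecondCountableTopology X] :
    ∃ 𝒮 : Set (Set X), 𝒮.Countable ∧ IsPiSystem 𝒮 ∧ (∀ s ∈ 𝒮, IsOpen s) ∧
      ∀ u, IsOpen u → ∀ x ∈ u, ∃ s ∈ 𝒮, s ∈ 𝓝 x ∧ s ⊆ u := by
  refine ⟨Set.sInter '' {t | t.Finite ∧ t ⊆ countableBasis X},
    (Set.countable_ofPred_finite_subset (countable_countableBasis X)).image _, ?_, ?_, ?_⟩
  · rintro _ ⟨t, ⟨htf, htB⟩, rfl⟩ _ ⟨t', ⟨htf', htB'⟩, rfl⟩ -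
    exact ⟨t ∪ t', ⟨htf.union htf', Set.union_subset htB htB'⟩, Set.sInter_union t t'⟩
  · rintro _ ⟨t, ⟨htf, htB⟩, rfl⟩
    exact htf.isOpen_sInter fun s hs => isOpen_of_mem_countableBasis (htB hs)
  · intro u hu x hx
    obtain ⟨v, hvB, hxv, hvu⟩ := (isBasis_countableBasis X).exists_subset_of_mem_open hx hu
    exact ⟨v, ⟨{v}, ⟨Set.finite_singleton v, Set.singleton_subset_iff.2 hvB⟩,
      Set.sInter_singleton v⟩, (isOpen_of_mem_countableBasis hvB).mem_nhds hxv, hvu⟩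

theorem stmt8_general {Ω S : Type*} [MeasurableSpace Ω]
    [MetricSpace S] [SeparableSpace S] [MeasurableSpace S] [BorelSpace S]
    (P : Measure Ω) [IsProbabilityMeasure P]
    (ξ : ℕ → Ω → S) (hξ : ∀ i, Measurable (ξ i))
    (μ : Ω → Measure S) (hμm : Measurable μ)
    (μInf : Ω → Measure (ℕ → S)) (hμInf : ∀ ω, IsIIDProduct (μ ω) (μInf ω))
    (hdirect : ∀ A : Set (ℕ → S), MeasurableSet A →
      P[(A.indicator fun _ => (1:ℝ)) ∘ (fun ω (i : ℕ) => ξ i ω) |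
          MeasurableSpace.comap μ inferInstance]
        =ᵐ[P] fun ω => (μInf ω A).toReal)
    (e : Ω → ℕ → ProbabilityMeasure S)
    (he : ∀ ω n, (e ω n : Measure S)
      = ((n + 1 : ℕ) : ℝ≥0∞)⁻¹ • ∑ i ∈ Finset.range (n + 1), Measure.dirac (ξ i ω))
    (μP : Ω → ProbabilityMeasure S) (hμP : ∀ ω, (μP ω : Measure S) = μ ω) :
    ∀ᵐ ω ∂P, Tendsto (fun n => e ω n) atTop (𝓝 (μP ω)) := by
  have := UniformSpace.secondCountable_of_separable S
  obtain ⟨𝒮, h𝒮c, h𝒮, h𝒮open, h𝒮nhds⟩ := exists_countable_isPiSystem_isOpen_nhds S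
  have hconv : ∀ s ∈ 𝒮, ∀ᵐ ω ∂P, Tendsto (fun n => e ω n s) atTop (𝓝 (μP ω s)) := by
    intro s hs
    have hsm := (h𝒮open s hs).measurableSet
    filter_upwards [ae_tendsto_frequency_of_isCondLaw_isIIDProduct hξ hμm hμInf hdirect hsm]
      with ω hω
    rw [← NNReal.tendsto_coe]
    convert hω.comp (tendsto_add_atTop_nat 1) using 1
    · ext n
      rw [← ProbabilityMeasure.measureReal_eq_coe_coeFn, he, measureReal_smul_sum_dirac _ _ hsm]
      simp
    · rw [← ProbabilityMeasure.measureReal_eq_coe_coeFn, hμP]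
  filter_upwards [(ae_ball_iff h𝒮c).2 hconv] with ω hω
  exact h𝒮.tendsto_probabilityMeasure_of_tendsto_of_mem
    (fun s hs => (h𝒮open s hs).measurableSet) h𝒮nhds hω

/-- If `ξ` is exchangeable with directing random measure `μ`, then a.s. the empirical measures
`μ_n = n⁻¹ ∑_{i=1}^n δ_{ξ_i}` converge weakly (in the Prohorov topology on `M₁(S)`) to `μ`. -/
theorem stmt8 {Ω S : Type*} [MeasurableSpace Ω]
    [MetricSpace S] [CompleteSpace S] [SeparableSpace S] [MeasurableSpace S] [BorelSpace S]
    (P : Measure Ω) [IsProbabilityMeasure P]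
    (ξ : ℕ → Ω → S) (hξ : ∀ i, Measurable (ξ i))
    (hexch : ∀ (m : ℕ) (k : Fin m → ℕ), Function.Injective k →
      Measure.map (fun ω (i : Fin m) => ξ (k i) ω) P
        = Measure.map (fun ω (i : Fin m) => ξ (i : ℕ) ω) P)
    (μ : Ω → Measure S) (hμm : Measurable μ) (hμp : ∀ ω, IsProbabilityMeasure (μ ω))
    (μInf : Ω → Measure (ℕ → S)) (hμInf : ∀ ω, IsIIDProduct (μ ω) (μInf ω))
    (hdirect : ∀ A : Set (ℕ → S), MeasurableSet A →
      P[(A.indicator fun _ => (1:ℝ)) ∘ (fun ω (i : ℕ) => ξ i ω) |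
          MeasurableSpace.comap μ inferInstance]
        =ᵐ[P] fun ω => (μInf ω A).toReal)
    (e : Ω → ℕ → ProbabilityMeasure S)
    (he : ∀ ω n, (e ω n : Measure S)
      = ((n + 1 : ℕ) : ℝ≥0∞)⁻¹ • ∑ i ∈ Finset.range (n + 1), Measure.dirac (ξ i ω))
    (μP : Ω → ProbabilityMeasure S) (hμP : ∀ ω, (μP ω : Measure S) = μ ω) :
    ∀ᵐ ω ∂P, Tendsto (fun n => e ω n) atTop (𝓝 (μP ω)) :=
  stmt8_general P ξ hξ μ hμm μInf hμInf hdirect e he μP hμP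
end
end

section
/- Let (T,𝒯) be a measurable space, Y a T-valued random variable, 𝒢 a σ-algebra with Y measurable with respect to 𝒢, and ξ = (ξ_i) a sequence of S-valued random variables that is conditionally i.i.d. given 𝒢. Let f: T × S → ℝ be measurable with E|f(Y, ξ₁)| < ∞, and let Z be any version of E[f(Y, ξ₁) | 𝒢]. Then P(lim_{n→∞} n⁻¹ ∑_{i=1}^n f(Y, ξ_i) = Z | 𝒢) = 1 almost surely; in particular, n⁻¹ ∑_{i=1}^n f(Y, ξ_i) → E[f(Y, ξ₁) | 𝒢] almost surely. -/
/-!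
The hypothesis on `ξ` says that `ω ↦ νInf ω` is a regular conditional law of `Ξ = (ξ i)ᵢ`
given `G`: the joint law of `(ω, Ξ ω)` on `(Ω, G) × (ℕ → S)` is the composition of `P` with the
kernel `νInf`. Disintegrating along this kernel, `E[g(·, Ξ) | G](ω) = ∫ g(ω, x) d(νInf ω)(x)` for
every jointly measurable integrable `g`. With `g(ω, x) = f(Y ω, x 0)` this identifies
`E[f(Y, ξ 0) | G]` with the `νInf ω`-mean of `f(Y ω, x 0)`; with `g` the indicator of the
convergence event it reduces everything to the ordinary strong law of large numbers under each
i.i.d. product `νInf ω`, in which `Y ω` is a fixed parameter.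
-/

open MeasureTheory ProbabilityTheory TopologicalSpace Filter Topology

noncomputable section

namespace IsIIDProduct

variable {X : Type*} [MeasurableSpace X] {ν : Measure X} [IsProbabilityMeasure ν]
  {π : Measure (ℕ → X)}

theorem measure_pi (h : IsIIDProduct ν π) (s : Finset ℕ) {A : ℕ → Set X}
    (hA : ∀ i, MeasurableSet (A i)) : π ((s : Set ℕ).pi A) = ∏ i ∈ s, ν (A i) := by
  obtain ⟨n, hsn⟩ := s.exists_nat_subset_range
  set A' : ℕ → Set X := (s : Set ℕ).piecewise A fun _ => Set.univ
  have hA' : ∀ i, MeasurableSet (A' i) := fun i => by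
    by_cases hi : i ∈ s <;> simp [A', hi, hA]
  have hcyl : {x : ℕ → X | ∀ i : Fin n, x i ∈ A' i} = (s : Set ℕ).pi A := by
    ext x
    simp only [Set.mem_ofPred_eq, Set.mem_pi, Finset.mem_coe, A', Set.piecewise]
    refine ⟨fun hx i hi => by simpa [hi] using hx ⟨i, Finset.mem_range.1 (hsn hi)⟩,
      fun hx i => ?_⟩
    split_ifs with hi
    · exact hx i hi
    · trivial
  rw [← hcyl, h.2 n (fun i => A' i) fun i => hA' i,
    Fin.prod_univ_eq_prod_range (fun i => ν (A' i)), ← Finset.prod_subset hsn]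
  · exact Finset.prod_congr rfl fun i hi => by simp [A', hi]
  · intro i _ hi
    simp [A', hi]

theorem map_eval (h : IsIIDProduct ν π) (i : ℕ) : π.map (fun x => x i) = ν := by
  ext B hB
  rw [Measure.map_apply (measurable_pi_apply i) hB]
  change π (Function.eval i ⁻¹' B) = ν B
  rw [← Set.singleton_pi i fun _ => B]
  simpa using h.measure_pi {i} fun _ => hB

theorem indepFun_eval (h : IsIIDProduct ν π) {i j : ℕ} (hij : i ≠ j) :
    IndepFun (fun x : ℕ → X => x i) (fun x => x j) π := by
  rw [indepFun_iff_measure_inter_preimage_eq_mul]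
  intro B C hB hC
  have hpair := h.measure_pi {i, j} (A := fun k => if k = i then B else C)
    fun k => by split_ifs <;> assumption
  rw [Finset.prod_pair hij, Finset.coe_insert, Finset.coe_singleton, Set.insert_pi,
    Set.singleton_pi] at hpair
  simp only [if_pos, if_neg hij.symm] at hpair
  rw [hpair, ← Measure.map_apply (measurable_pi_apply i) hB,
    ← Measure.map_apply (measurable_pi_apply j) hC, h.map_eval, h.map_eval]

theorem ae_tendsto_average (h : IsIIDProduct ν π) {g : X → ℝ} (hg : Measurable g)
    (hint : Integrable (fun x : ℕ → X => g (x 0)) π) :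
    ∀ᵐ x ∂π, Tendsto (fun n : ℕ => ((n : ℝ) + 1)⁻¹ * ∑ i ∈ Finset.range (n + 1), g (x i))
      atTop (𝓝 (∫ x, g (x 0) ∂π)) := by
  have hident : ∀ i, IdentDistrib (fun x : ℕ → X => x i) (fun x => x 0) π π := fun i =>
    ⟨(measurable_pi_apply i).aemeasurable, (measurable_pi_apply 0).aemeasurable, by
      rw [h.map_eval, h.map_eval]⟩
  filter_upwards [strong_law_ae_real (fun i (x : ℕ → X) => g (x i)) hint
    (fun i j hij => (h.indepFun_eval hij).comp hg hg) fun i => (hident i).comp hg] with x hx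
  refine (hx.comp (tendsto_add_atTop_nat 1)).congr fun n => ?_
  simp only [Function.comp_apply, Nat.cast_add, Nat.cast_one]
  ring

end IsIIDProduct

theorem IsIIDProduct.measurable {X α : Type*} [MeasurableSpace X] {_ : MeasurableSpace α}
    {ν : α → Measure X} [∀ a, IsProbabilityMeasure (ν a)] (hν : Measurable ν)
    {π : α → Measure (ℕ → X)}
    (h : ∀ a, IsIIDProduct (ν a) (π a)) : Measurable π := by
  have := fun a => (h a).1
  refine .measure_of_isPiSystem_of_isProbabilityMeasure generateFrom_squareCylinders.symm
    (isPiSystem_squareCylinders (fun _ => MeasurableSpace.isPiSystem_measurableSet)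
      fun _ => MeasurableSet.univ) ?_
  rintro _ ⟨s, A, hA, rfl⟩
  simp_rw [(h _).measure_pi s fun i => hA i (Set.mem_univ i)]
  exact Finset.measurable_prod _ fun i _ =>
    (Measure.measurable_coe (hA i (Set.mem_univ i))).comp hν

theorem le_of_condExp_ae_eq_one {α : Type*} {m mα : MeasurableSpace α} {μ : Measure α}
    [NeZero μ] {f : α → ℝ} (h : μ[f | m] =ᵐ[μ] fun _ => 1) : m ≤ mα := by
  by_contra hm
  rw [condExp_of_not_le hm] at h
  obtain ⟨a, ha⟩ := h.exists
  exact zero_ne_one ha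

theorem ae_mem_of_condExp_indicator_ae_eq_one {α : Type*} {m mα : MeasurableSpace α}
    {μ : Measure α} [IsFiniteMeasure μ] (hm : m ≤ mα) {s : Set α} (hs : MeasurableSet s)
    (h : μ[s.indicator fun _ => (1 : ℝ) | m] =ᵐ[μ] fun _ => 1) : ∀ᵐ a ∂μ, a ∈ s := by
  refine (ae_mem_iff_measure_eq hs.nullMeasurableSet).2 <|
    (ENNReal.toReal_eq_toReal_iff' (measure_ne_top μ _) (measure_ne_top μ _)).1 ?_
  calc μ.real s = ∫ a, s.indicator (fun _ => (1 : ℝ)) a ∂μ := by simp [integral_indicator hs]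
    _ = ∫ a, (μ[s.indicator fun _ => (1 : ℝ) | m]) a ∂μ := (integral_condExp hm).symm
    _ = μ.real Set.univ := by simp [integral_congr_ae h]

section Disintegration

variable {α β γ : Type*} {mα : MeasurableSpace α} {mβ : MeasurableSpace β}
  {mγ : MeasurableSpace γ} {μ : Measure α} {X : α → β} {Y : α → γ}
  {κ : Kernel β γ}

theorem map_prodMk_eq_compProd_of_condExp [IsFiniteMeasure μ] [IsFiniteKernel κ]
    (hX : Measurable X) (hY : Measurable Y)
    (h : ∀ B, MeasurableSet B → μ[(B.indicator fun _ => (1 : ℝ)) ∘ Y | mβ.comap X]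
      =ᵐ[μ] fun a => (κ (X a) B).toReal) :
    μ.map (fun a => (X a, Y a)) = μ.map X ⊗ₘ κ := by
  have hrect : ∀ C, MeasurableSet C → ∀ B, MeasurableSet B →
      μ.map (fun a => (X a, Y a)) (C ×ˢ B) = (μ.map X ⊗ₘ κ) (C ×ˢ B) := by
    intro C hC B hB
    have hκB : Measurable fun a => κ (X a) B := (κ.measurable_coe hB).comp hX
    rw [← ENNReal.toReal_eq_toReal_iff' (measure_ne_top _ _) (measure_ne_top _ _),
      Measure.map_apply (hX.prodMk hY) (hC.prod hB), Set.mk_preimage_prod,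
      Measure.compProd_apply_prod hC hB, setLIntegral_map hC (κ.measurable_coe hB) hX,
      ← integral_toReal hκB.aemeasurable (ae_of_all _ fun a => measure_lt_top _ _),
      ← measureReal_def]
    have hind : (B.indicator fun _ => (1 : ℝ)) ∘ Y = (Y ⁻¹' B).indicator fun _ => 1 := rfl
    have hint : Integrable ((B.indicator fun _ => (1 : ℝ)) ∘ Y) μ := by
      rw [hind]
      exact (integrable_const _).indicator (hY hB)
    calc μ.real (X ⁻¹' C ∩ Y ⁻¹' B)
        = ∫ a in X ⁻¹' C, ((B.indicator fun _ => (1 : ℝ)) ∘ Y) a ∂μ := by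
          rw [hind, setIntegral_indicator (hY hB), setIntegral_const, smul_eq_mul, mul_one]
      _ = ∫ a in X ⁻¹' C, (μ[(B.indicator fun _ => (1 : ℝ)) ∘ Y | mβ.comap X]) a ∂μ :=
          (setIntegral_condExp hX.comap_le hint ⟨C, hC, rfl⟩).symm
      _ = ∫ a in X ⁻¹' C, (κ (X a) B).toReal ∂μ :=
          setIntegral_congr_ae (hX hC) ((h B hB).mono fun a ha _ => ha)
  refine ext_of_generate_finite _ generateFrom_prod.symm isPiSystem_prod ?_ ?_
  · rintro _ ⟨C, hC, B, hB, rfl⟩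
    exact hrect C hC B hB
  · simpa only [Set.univ_prod_univ] using hrect _ .univ _ .univ

variable {E : Type*} [NormedAddCommGroup E] {f : β × γ → E}

theorem integrable_of_map_eq_compProd (hX : Measurable X) (hY : Measurable Y)
    (hmap : μ.map (fun a => (X a, Y a)) = μ.map X ⊗ₘ κ) (hf : StronglyMeasurable f)
    (hint : Integrable (fun a => f (X a, Y a)) μ) : Integrable f (μ.map X ⊗ₘ κ) := by
  rw [← hmap]
  exact (integrable_map_measure hf.aestronglyMeasurable (hX.prodMk hY).aemeasurable).2 hint

theorem ae_integrable_of_map_eq_compProd [SFinite μ] [IsSFiniteKernel κ] (hX : Measurable X)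
    (hY : Measurable Y) (hmap : μ.map (fun a => (X a, Y a)) = μ.map X ⊗ₘ κ)
    (hf : StronglyMeasurable f) (hint : Integrable (fun a => f (X a, Y a)) μ) :
    ∀ᵐ a ∂μ, Integrable (fun y => f (X a, y)) (κ (X a)) :=
  ae_of_ae_map hX.aemeasurable ((Measure.integrable_compProd_iff hf.aestronglyMeasurable).1
    (integrable_of_map_eq_compProd hX hY hmap hf hint)).1

theorem condExp_prod_ae_eq_integral_of_map_eq_compProd [NormedSpace ℝ E] [CompleteSpace E]
    [IsFiniteMeasure μ] [IsSFiniteKernel κ]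
    (hX : Measurable X) (hY : Measurable Y) (hmap : μ.map (fun a => (X a, Y a)) = μ.map X ⊗ₘ κ)
    (hf : StronglyMeasurable f) (hint : Integrable (fun a => f (X a, Y a)) μ) :
    μ[fun a => f (X a, Y a) | mβ.comap X] =ᵐ[μ] fun a => ∫ y, f (X a, y) ∂κ (X a) := by
  have hfρ := integrable_of_map_eq_compProd hX hY hmap hf hint
  have hg : StronglyMeasurable fun b => ∫ y, f (b, y) ∂κ b := hf.integral_kernel_prod_right'
  have hgint : Integrable (fun a => ∫ y, f (X a, y) ∂κ (X a)) μ :=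
    (integrable_map_measure hg.aestronglyMeasurable hX.aemeasurable).1 hfρ.integral_compProd
  refine (ae_eq_condExp_of_forall_setIntegral_eq hX.comap_le hint
    (fun _ _ _ => hgint.integrableOn) ?_
    (hg.comp_measurable (Measurable.of_comap_le le_rfl)).aestronglyMeasurable).symm
  rintro _ ⟨C, hC, rfl⟩ -
  calc ∫ a in X ⁻¹' C, ∫ y, f (X a, y) ∂κ (X a) ∂μ
      = ∫ b in C, ∫ y, f (b, y) ∂κ b ∂(μ.map X) :=
        (setIntegral_map hC hg.aestronglyMeasurable hX.aemeasurable).symm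
    _ = ∫ p in C ×ˢ Set.univ, f p ∂(μ.map X ⊗ₘ κ) := by
        rw [Measure.setIntegral_compProd hC .univ hfρ.integrableOn]
        simp only [Measure.restrict_univ]
    _ = ∫ a in X ⁻¹' C, f (X a, Y a) ∂μ := by
        rw [← hmap, setIntegral_map (hC.prod .univ) hf.aestronglyMeasurable
          (hX.prodMk hY).aemeasurable, Set.mk_preimage_prod, Set.preimage_univ, Set.inter_univ]

theorem condExp_indicator_preimage_ae_eq_one [IsFiniteMeasure μ] [IsMarkovKernel κ]
    (hX : Measurable X) (hY : Measurable Y) (hmap : μ.map (fun a => (X a, Y a)) = μ.map X ⊗ₘ κ)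
    {A : Set (β × γ)} (hA : MeasurableSet A) (h : ∀ᵐ a ∂μ, ∀ᵐ y ∂κ (X a), (X a, y) ∈ A) :
    μ[((fun a => (X a, Y a)) ⁻¹' A).indicator fun _ => (1 : ℝ) | mβ.comap X]
      =ᵐ[μ] fun _ => 1 := by
  refine (condExp_prod_ae_eq_integral_of_map_eq_compProd hX hY hmap
    (stronglyMeasurable_const.indicator hA)
    ((integrable_const (1 : ℝ)).indicator ((hX.prodMk hY) hA))).trans ?_
  filter_upwards [h] with a ha
  rw [integral_congr_ae (ha.mono fun y hy => Set.indicator_of_mem hy _)]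
  simp

end Disintegration

section ConditionalStrongLaw

variable {α β S : Type*} {mα : MeasurableSpace α} {mβ : MeasurableSpace β} [MeasurableSpace S]
  {μ : Measure α} [IsFiniteMeasure μ] {X : α → β} {Y : α → ℕ → S} {κ : Kernel β (ℕ → S)}
  [IsMarkovKernel κ] {ν : β → Measure S} [∀ b, IsProbabilityMeasure (ν b)]

theorem cond_strong_law_of_map_eq_compProd (hX : Measurable X) (hY : Measurable Y)
    (hmap : μ.map (fun a => (X a, Y a)) = μ.map X ⊗ₘ κ) (hκ : ∀ b, IsIIDProduct (ν b) (κ b))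
    {F : β × S → ℝ} (hF : Measurable F) (hint : Integrable (fun a => F (X a, Y a 0)) μ) :
    μ[{a | Tendsto (fun n : ℕ => ((n : ℝ) + 1)⁻¹ * ∑ i ∈ Finset.range (n + 1), F (X a, Y a i))
        atTop (𝓝 (∫ x, F (X a, x 0) ∂κ (X a)))}.indicator (fun _ => (1 : ℝ)) | mβ.comap X]
      =ᵐ[μ] (fun _ => 1) ∧
    ∀ᵐ a ∂μ, Tendsto (fun n : ℕ => ((n : ℝ) + 1)⁻¹ * ∑ i ∈ Finset.range (n + 1), F (X a, Y a i))
      atTop (𝓝 (∫ x, F (X a, x 0) ∂κ (X a))) := by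
  have hF₀ : Measurable fun p : β × (ℕ → S) => F (p.1, p.2 0) :=
    hF.comp (measurable_fst.prodMk ((measurable_pi_apply 0).comp measurable_snd))
  have hA : MeasurableSet {p : β × (ℕ → S) | Tendsto
      (fun n : ℕ => ((n : ℝ) + 1)⁻¹ * ∑ i ∈ Finset.range (n + 1), F (p.1, p.2 i))
      atTop (𝓝 (∫ x, F (p.1, x 0) ∂κ p.1))} := by
    have hmean : Measurable fun b => ∫ x, F (b, x 0) ∂κ b :=
      (hF₀.stronglyMeasurable.integral_kernel_prod_right' (κ := κ)).measurable
    refine measurableSet_tendsto_fun (fun n => (Finset.measurable_sum _ fun i _ => ?_).const_mul _)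
      (hmean.comp measurable_fst)
    exact hF.comp (measurable_fst.prodMk ((measurable_pi_apply i).comp measurable_snd))
  have hcond := condExp_indicator_preimage_ae_eq_one hX hY hmap hA <| by
    filter_upwards [ae_integrable_of_map_eq_compProd hX hY hmap hF₀.stronglyMeasurable hint]
      with a ha
    exact (hκ (X a)).ae_tendsto_average (g := fun s => F (X a, s))
      (hF.comp measurable_prodMk_left) ha
  exact ⟨hcond, ae_mem_of_condExp_indicator_ae_eq_one hX.comap_le ((hX.prodMk hY) hA) hcond⟩

end ConditionalStrongLaw

theorem cond_strong_law_ae {Ω S T : Type*} {m mΩ : MeasurableSpace Ω} [MeasurableSpace S]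
    [MeasurableSpace T] {P : Measure Ω} [IsFiniteMeasure P] (hm : m ≤ mΩ)
    {ξ : ℕ → Ω → S} (hξ : ∀ i, Measurable (ξ i))
    {ν : Ω → Measure S} (hνm : Measurable[m] ν) [∀ ω, IsProbabilityMeasure (ν ω)]
    {νInf : Ω → Measure (ℕ → S)} (hνInf : ∀ ω, IsIIDProduct (ν ω) (νInf ω))
    (hcond : ∀ A : Set (ℕ → S), MeasurableSet A →
      P[(A.indicator fun _ => (1 : ℝ)) ∘ (fun ω (i : ℕ) => ξ i ω) | m]
        =ᵐ[P] fun ω => (νInf ω A).toReal)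
    {Y : Ω → T} (hY : Measurable[m] Y) {f : T × S → ℝ} (hf : Measurable f)
    (hint : Integrable (fun ω => f (Y ω, ξ 0 ω)) P)
    {Z : Ω → ℝ} (hZ : Z =ᵐ[P] P[fun ω => f (Y ω, ξ 0 ω) | m]) :
    P[{ω | Tendsto (fun n : ℕ => ((n : ℝ) + 1)⁻¹ * ∑ i ∈ Finset.range (n + 1), f (Y ω, ξ i ω))
        atTop (𝓝 (Z ω))}.indicator (fun _ => (1 : ℝ)) | m] =ᵐ[P] (fun _ => 1) ∧
    ∀ᵐ ω ∂P, Tendsto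
      (fun n : ℕ => ((n : ℝ) + 1)⁻¹ * ∑ i ∈ Finset.range (n + 1), f (Y ω, ξ i ω))
      atTop (𝓝 ((P[fun ω' => f (Y ω', ξ 0 ω') | m]) ω)) := by
  let κ : Kernel[m] Ω (ℕ → S) := @Kernel.mk _ _ m _ νInf (IsIIDProduct.measurable hνm hνInf)
  have : IsMarkovKernel κ := ⟨fun ω => (hνInf ω).1⟩
  have hid := measurable_id'' hm
  have hΞ : Measurable fun ω i => ξ i ω := measurable_pi_lambda _ hξ
  have hmap := map_prodMk_eq_compProd_of_condExp (μ := P) (κ := κ) hid hΞ fun B hB => by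
    rw [MeasurableSpace.comap_id]
    exact hcond B hB
  have hF : Measurable[m.prod _] fun p : Ω × S => f (Y p.1, p.2) :=
    hf.comp ((hY.comp measurable_fst).prodMk measurable_snd)
  have hlim : P[fun ω => f (Y ω, ξ 0 ω) | m] =ᵐ[P] fun ω => ∫ x, f (Y ω, x 0) ∂νInf ω := by
    have hF₀ : Measurable[m.prod _] fun p : Ω × (ℕ → S) => f (Y p.1, p.2 0) :=
      hF.comp (measurable_fst.prodMk ((measurable_pi_apply 0).comp measurable_snd))
    have h := condExp_prod_ae_eq_integral_of_map_eq_compProd hid hΞ hmap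
      hF₀.stronglyMeasurable hint
    rwa [MeasurableSpace.comap_id] at h
  obtain ⟨hcondExp, hae⟩ := cond_strong_law_of_map_eq_compProd hid hΞ hmap hνInf hF hint
  rw [MeasurableSpace.comap_id] at hcondExp
  refine ⟨(condExp_congr_ae ?_).trans hcondExp, ?_⟩
  · filter_upwards [hZ.trans hlim] with ω hω
    exact Set.indicator_const_eq_indicator_const (by simp only [Set.mem_ofPred_eq, hω]; rfl)
  · filter_upwards [hae, hlim] with ω hω hlimω
    rw [hlimω]
    exact hω

/-- Conditional strong law of large numbers: if `ξ` is conditionally i.i.d. given `𝒢`,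
`Y ∈ 𝒢`, `E|f(Y,ξ₁)| < ∞`, and `Z` is any version of `E[f(Y,ξ₁) | 𝒢]`, then
`P(lim_n n⁻¹ ∑_{i=1}^n f(Y,ξ_i) = Z | 𝒢) = 1` a.s.; in particular
`n⁻¹ ∑_{i=1}^n f(Y,ξ_i) → E[f(Y,ξ₁) | 𝒢]` a.s. -/
theorem stmt10 {Ω S T : Type*} [MeasurableSpace Ω]
    [MetricSpace S] [CompleteSpace S] [SeparableSpace S] [MeasurableSpace S] [BorelSpace S]
    [MeasurableSpace T]
    (P : Measure Ω) [IsProbabilityMeasure P]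
    (ξ : ℕ → Ω → S) (hξ : ∀ i, Measurable (ξ i))
    (G : MeasurableSpace Ω) (hG : G ≤ ‹MeasurableSpace Ω›)
    (ν : Ω → Measure S) (hνm : Measurable[G] ν) (hνp : ∀ ω, IsProbabilityMeasure (ν ω))
    (νInf : Ω → Measure (ℕ → S)) (hνInf : ∀ ω, IsIIDProduct (ν ω) (νInf ω))
    (hcond : ∀ A : Set (ℕ → S), MeasurableSet A →
      P[(A.indicator fun _ => (1:ℝ)) ∘ (fun ω (i : ℕ) => ξ i ω) | G]
        =ᵐ[P] fun ω => (νInf ω A).toReal)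
    (Y : Ω → T) (hY : Measurable[G] Y)
    (f : T × S → ℝ) (hf : Measurable f)
    (hint : Integrable (fun ω => f (Y ω, ξ 0 ω)) P)
    (Z : Ω → ℝ) (hZ : Z =ᵐ[P] P[fun ω => f (Y ω, ξ 0 ω) | G]) :
    P[Set.indicator
        {ω | Tendsto
          (fun n : ℕ => ((n : ℝ) + 1)⁻¹ * ∑ i ∈ Finset.range (n + 1), f (Y ω, ξ i ω))
          atTop (𝓝 (Z ω))}
        (fun _ => (1:ℝ)) | G] =ᵐ[P] (fun _ => 1) ∧
    ∀ᵐ ω ∂P, Tendsto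
      (fun n : ℕ => ((n : ℝ) + 1)⁻¹ * ∑ i ∈ Finset.range (n + 1), f (Y ω, ξ i ω))
      atTop (𝓝 ((P[fun ω' => f (Y ω', ξ 0 ω') | G]) ω)) := by
  have := hνp
  refine cond_strong_law_ae (le_of_condExp_ae_eq_one ((hcond _ .univ).trans ?_)) hξ hνm hνInf
    hcond hY hf hint hZ
  filter_upwards with ω
  simp [(hνInf ω).1]
end
end

section
/- Let ξ = (ξ_i) be conditionally i.i.d. given 𝒢 (S-valued), Y a T-valued random variable measurable with respect to 𝒢, and f: T × S → ℝ measurable. Then the sequence ξ'_i = f(Y, ξ_i) is conditionally i.i.d. given 𝒢: P(⋂_{i=1}^n {ξ'_i ∈ B_i} | 𝒢) = ∏_{i=1}^n ∫_S 1_{B_i}(f(Y,x)) ν(dx) a.s. for all Borel B₁,...,B_n ⊆ ℝ, where ν is the directing random measure of ξ. -/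
/-!
Since `Y` is `𝒢`-measurable, the directing measure of `ξ` also gives the conditional law of the
pair `(Y, ξ)`: `P((Y, ξ) ∈ C | 𝒢) = ν^∞ {x | (Y, x) ∈ C}` a.s. for every measurable
`C ⊆ T × S^ℕ`. On a rectangle `D × A` this is the hypothesis on `ξ` after pulling the
`𝒢`-measurable factor `1_{Y ∈ D}` out; integrated over a fixed `𝒢`-set, both sides are finite
measures in `C`, so agreement on rectangles suffices. The theorem is the case
`C = {(t, x) | f (t, x_i) ∈ B_i for all i < n}`, evaluated by the product formula for `ν^∞`.
-/

open MeasureTheory ProbabilityTheory TopologicalSpace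

open Set ENNReal

namespace IsIIDProduct

variable {X : Type*} [MeasurableSpace X] {ν : Measure X} {π : Measure (ℕ → X)}

theorem measure_pi_finset [IsProbabilityMeasure ν] (h : IsIIDProduct ν π) (s : Finset ℕ)
    {t : ℕ → Set X} (ht : ∀ i, MeasurableSet (t i)) :
    π ((s : Set ℕ).pi t) = ∏ i ∈ s, ν (t i) := by
  classical
  obtain ⟨n, hn⟩ : ∃ n, s ⊆ Finset.range n := ⟨s.sup id + 1, fun i hi =>
    Finset.mem_range.2 (Nat.lt_succ_of_le (Finset.le_sup (f := id) hi))⟩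
  let A : ℕ → Set X := fun i => if i ∈ s then t i else univ
  have hbox : (s : Set ℕ).pi t = {x | ∀ i : Fin n, x i ∈ A i} := by
    ext x
    refine ⟨fun hx i => ?_, fun hx i hi => ?_⟩
    · by_cases hi : (i : ℕ) ∈ s
      · simpa [A, hi] using hx i hi
      · simp [A, hi]
    · rw [Finset.mem_coe] at hi
      simpa only [A, if_pos hi] using hx ⟨i, Finset.mem_range.1 (hn hi)⟩
  have hA : ∀ i, MeasurableSet (A i) := fun i => by
    by_cases hi : i ∈ s <;> simp [A, hi, ht i]
  rw [hbox, h.2 n (fun i => A i) fun i => hA i, Fin.prod_univ_eq_prod_range (fun i => ν (A i)),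
    ← Finset.inter_eq_right.2 hn, ← Finset.prod_ite_mem]
  refine Finset.prod_congr rfl fun i _ => ?_
  by_cases hi : i ∈ s <;> simp [A, hi]

theorem measurable_s11 {Ω : Type*} {G : MeasurableSpace Ω} {ν : Ω → Measure X}
    [∀ ω, IsProbabilityMeasure (ν ω)] (hν : Measurable[G] ν) {π : Ω → Measure (ℕ → X)}
    (h : ∀ ω, IsIIDProduct (ν ω) (π ω)) : Measurable[G] π := by
  have := fun ω => (h ω).1
  refine .measure_of_isPiSystem_of_isProbabilityMeasure generateFrom_squareCylinders.symm
    (isPiSystem_squareCylinders (fun _ => MeasurableSpace.isPiSystem_measurableSet)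
      fun _ => .univ) ?_
  rintro _ ⟨s, t, ht, rfl⟩
  replace ht : ∀ i, MeasurableSet (t i) := fun i => ht i trivial
  simp_rw [(h _).measure_pi_finset s ht]
  exact Finset.measurable_prod _ fun i _ => (Measure.measurable_coe (ht i)).comp hν

end IsIIDProduct

theorem le_of_condExp_ae_eq_of_ne_zero {Ω : Type*} {m m₀ : MeasurableSpace Ω} {μ : Measure Ω}
    [NeZero μ] {f g : Ω → ℝ} (h : μ[f | m] =ᵐ[μ] g) (hg : ∀ ω, g ω ≠ 0) : m ≤ m₀ := by
  by_contra hm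
  rw [condExp_of_not_le hm] at h
  obtain ⟨ω, hω⟩ := h.exists
  exact hg ω hω.symm

theorem setLIntegral_eq_measure_inter_iff_condExp_indicator_ae_eq {Ω : Type*}
    {m m₀ : MeasurableSpace Ω} (hm : m ≤ m₀) {μ : Measure Ω} [IsFiniteMeasure μ]
    {E : Set Ω} (hE : MeasurableSet[m₀] E) {g : Ω → ℝ≥0∞} (hg : Measurable[m] g)
    (hg_le : ∀ ω, g ω ≤ 1) :
    (∀ s, MeasurableSet[m] s → ∫⁻ ω in s, g ω ∂μ = μ (s ∩ E)) ↔
      μ[E.indicator fun _ => (1 : ℝ) | m] =ᵐ[μ] fun ω => (g ω).toReal := by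
  have hg₀ : Measurable[m₀] g := hg.mono hm le_rfl
  have h_int : Integrable (fun ω => (g ω).toReal) μ :=
    (integrable_const (1 : ℝ)).mono' hg₀.ennreal_toReal.aestronglyMeasurable
      (.of_forall fun ω => by simpa using toReal_mono one_ne_top (hg_le ω))
  have h_iff : ∀ s, MeasurableSet[m] s → (∫⁻ ω in s, g ω ∂μ = μ (s ∩ E) ↔
      ∫ ω in s, (g ω).toReal ∂μ = ∫ ω in s, E.indicator (fun _ => (1 : ℝ)) ω ∂μ) := by
    intro s hs
    rw [integral_toReal hg₀.aemeasurable (.of_forall fun ω => (hg_le ω).trans_lt one_lt_top),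
      setIntegral_indicator hE, setIntegral_const, smul_eq_mul, mul_one, measureReal_def,
      toReal_eq_toReal_iff']
    · exact (setLIntegral_lt_top_of_le_nnreal (measure_ne_top _ _)
        ⟨1, fun ω _ => by simpa using hg_le ω⟩).ne
    · exact measure_ne_top _ _
  have h_ind : Integrable (E.indicator fun _ => (1 : ℝ)) μ := (integrable_const 1).indicator hE
  constructor
  · intro h
    exact (ae_eq_condExp_of_forall_setIntegral_eq hm h_ind (fun _ _ _ => h_int.integrableOn)
      (fun s hs _ => (h_iff s hs).1 (h s hs)) hg.ennreal_toReal.aestronglyMeasurable).symm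
  · intro h s hs
    rw [h_iff s hs, ← setIntegral_condExp hm h_ind hs]
    exact setIntegral_congr_ae (hm s hs) (h.mono fun ω hω _ => hω.symm)

theorem Measurable.measure_map_prodMk {α β γ : Type*} {mα : MeasurableSpace α}
    [MeasurableSpace β] [MeasurableSpace γ] {κ : α → Measure γ} [∀ a, IsProbabilityMeasure (κ a)]
    (hκ : Measurable κ) {f : α → β} (hf : Measurable f) :
    Measurable fun a => (κ a).map (Prod.mk (f a)) := by
  let η : Kernel α γ := ⟨κ, hκ⟩
  have : IsMarkovKernel η := ⟨fun a => inferInstanceAs (IsProbabilityMeasure (κ a))⟩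
  refine Measure.measurable_of_measurable_coe _ fun C hC => ?_
  simp_rw [Measure.map_apply measurable_prodMk_left hC]
  have h := (Kernel.deterministic f hf ×ₖ η).measurable_coe hC
  simp_rw [Kernel.deterministic_prod_apply' hf η _ hC] at h
  exact h

theorem condExp_indicator_prodMk_ae_eq {Ω E T : Type*} {G mΩ : MeasurableSpace Ω}
    [MeasurableSpace E] [MeasurableSpace T] (hG : G ≤ mΩ)
    {P : Measure Ω} [IsFiniteMeasure P] {X : Ω → E} (hX : Measurable X) {κ : Ω → Measure E}
    [∀ ω, IsProbabilityMeasure (κ ω)] (hκ : Measurable[G] κ)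
    (hcond : ∀ A, MeasurableSet A →
      P[(X ⁻¹' A).indicator fun _ => (1 : ℝ) | G] =ᵐ[P] fun ω => (κ ω A).toReal)
    {Y : Ω → T} (hY : Measurable[G] Y) {C : Set (T × E)} (hC : MeasurableSet C) :
    P[((fun ω => (Y ω, X ω)) ⁻¹' C).indicator fun _ => (1 : ℝ) | G]
      =ᵐ[P] fun ω => (κ ω (Prod.mk (Y ω) ⁻¹' C)).toReal := by
  have hκY := hκ.measure_map_prodMk hY
  have hκY₀ : Measurable[mΩ] fun ω => (κ ω).map (Prod.mk (Y ω)) := hκY.mono hG le_rfl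
  have hYX : Measurable fun ω => (Y ω, X ω) := (hY.mono hG le_rfl).prodMk hX
  simp_rw [← Measure.map_apply measurable_prodMk_left hC]
  refine (setLIntegral_eq_measure_inter_iff_condExp_indicator_ae_eq hG (hYX hC)
    (g := fun ω => (κ ω).map (Prod.mk (Y ω)) C) ((Measure.measurable_coe hC).comp hκY)
    fun _ => prob_le_one).1 fun s hs => ?_
  suffices (P.restrict s).map (fun ω => (Y ω, X ω)) =
      (P.restrict s).bind fun ω => (κ ω).map (Prod.mk (Y ω)) by
    rw [← Measure.bind_apply hC hκY₀.aemeasurable, ← this,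
      Measure.map_apply hYX hC, Measure.restrict_apply (hYX hC), inter_comm]
  refine Measure.ext_prod fun {D A} hD hA => ?_
  have hYD : MeasurableSet[G] (Y ⁻¹' D) := hY hD
  have h_rect : ∀ ω, (κ ω).map (Prod.mk (Y ω)) (D ×ˢ A) = (Y ⁻¹' D).indicator (κ · A) ω := by
    intro ω
    rw [Measure.map_apply measurable_prodMk_left (hD.prod hA)]
    by_cases hω : Y ω ∈ D <;> simp [hω, mk_preimage_prod_right, mk_preimage_prod_right_eq_empty]
  rw [Measure.bind_apply (hD.prod hA) hκY₀.aemeasurable]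
  simp_rw [h_rect]
  rw [lintegral_indicator (hG _ hYD), Measure.restrict_restrict (hG _ hYD),
    (setLIntegral_eq_measure_inter_iff_condExp_indicator_ae_eq hG (hX hA) (g := fun ω => κ ω A)
      ((Measure.measurable_coe hA).comp hκ) fun _ => prob_le_one).2 (hcond A hA) _ (hYD.inter hs),
    Measure.map_apply hYX (hD.prod hA), Measure.restrict_apply (hYX (hD.prod hA))]
  congr 1
  ext ω
  simp only [mem_inter_iff, mem_preimage, mem_prod]
  tauto

/-- If `ξ` is conditionally i.i.d. given `𝒢` with directing random measure `ν`, `Y ∈ 𝒢`,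
and `f : T × S → ℝ` is measurable, then `ξ'_i = f(Y, ξ_i)` is conditionally i.i.d. given `𝒢`:
`P(⋂_{i=1}^n {ξ'_i ∈ B_i} | 𝒢) = ∏_{i=1}^n ∫ 1_{B_i}(f(Y,x)) ν(dx)` a.s. -/
theorem stmt11 {Ω S T : Type*} [MeasurableSpace Ω]
    [MetricSpace S] [CompleteSpace S] [SeparableSpace S] [MeasurableSpace S] [BorelSpace S]
    [MeasurableSpace T]
    (P : Measure Ω) [IsProbabilityMeasure P]
    (ξ : ℕ → Ω → S) (hξ : ∀ i, Measurable (ξ i))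
    (G : MeasurableSpace Ω) (hG : G ≤ ‹MeasurableSpace Ω›)
    (ν : Ω → Measure S) (hνm : Measurable[G] ν) (hνp : ∀ ω, IsProbabilityMeasure (ν ω))
    (νInf : Ω → Measure (ℕ → S)) (hνInf : ∀ ω, IsIIDProduct (ν ω) (νInf ω))
    (hcond : ∀ A : Set (ℕ → S), MeasurableSet A →
      P[(A.indicator fun _ => (1:ℝ)) ∘ (fun ω (i : ℕ) => ξ i ω) | G]
        =ᵐ[P] fun ω => (νInf ω A).toReal)
    (Y : Ω → T) (hY : Measurable[G] Y)
    (f : T × S → ℝ) (hf : Measurable f) :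
    ∀ (n : ℕ) (B : Fin n → Set ℝ), (∀ i, MeasurableSet (B i)) →
      P[Set.indicator {ω | ∀ i : Fin n, f (Y ω, ξ (i : ℕ) ω) ∈ B i} (fun _ => (1:ℝ)) | G]
        =ᵐ[P] fun ω => ∏ i : Fin n, ((ν ω) {x | f (Y ω, x) ∈ B i}).toReal := by
  intro n B hB
  have := fun ω => (hνInf ω).1
  let C : Set (T × (ℕ → S)) := {p | ∀ i : Fin n, f (p.1, p.2 i) ∈ B i}
  have hC : MeasurableSet C := by
    simp_rw [C, ofPred_forall]
    exact .iInter fun i => (by fun_prop : Measurable fun p : T × (ℕ → S) => f (p.1, p.2 i)) (hB i)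
  -- `P[· | G]` is `0` unless `G` is a sub-σ-algebra, so `hcond` at `A = univ` forces it to be one.
  have hle := le_of_condExp_ae_eq_of_ne_zero (hcond univ .univ) fun ω => by simp
  refine (condExp_indicator_prodMk_ae_eq hle (X := fun ω i => ξ i ω) (by fun_prop)
    (IsIIDProduct.measurable_s11 hνm hνInf) hcond hY hC).trans (.of_forall fun ω => ?_)
  dsimp only
  rw [← ENNReal.toReal_prod]
  exact congrArg ENNReal.toReal
    ((hνInf ω).2 n _ fun i => hf.comp measurable_prodMk_left (hB i))
end

section
/- Let ξ be a row exchangeable array with row distributions (μ_i). Fix M ∈ ℕ, and for each i ≤ M fix N_i < O_i and Borel sets A_{ij} ⊆ S for N_i < j ≤ O_i. Let 𝒢 be any sub-σ-algebra of the σ-algebra generated by the observed entries {ξ_{ij} : i ≤ M, j ≤ N_i}. Then P(⋂_{i=1}^M ⋂_{j=N_i+1}^{O_i} {ξ_{ij} ∈ A_{ij}} | 𝒢) = E[∏_{i=1}^M ∏_{j=N_i+1}^{O_i} μ_i(A_{ij}) | 𝒢] almost surely. -/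
open MeasureTheory ProbabilityTheory TopologicalSpace

noncomputable section

/-- A finite permutation of `ℕ`. -/
def FinitePerm (σ : Equiv.Perm ℕ) : Prop := {n | σ n ≠ n}.Finite

/-- The array `ξ` is row exchangeable. -/
def RowExchangeable {Ω S : Type*} [MeasurableSpace Ω] [MeasurableSpace S]
    (P : Measure Ω) (ξ : ℕ → ℕ → Ω → S) : Prop :=
  (∀ (i : ℕ) (τ : Equiv.Perm ℕ), FinitePerm τ →
    Measure.map (fun ω (j : ℕ) => ξ i (τ j) ω) P = Measure.map (fun ω (j : ℕ) => ξ i j ω) P) ∧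
  (∀ σ : Equiv.Perm ℕ, FinitePerm σ →
    Measure.map (fun ω (i j : ℕ) => ξ (σ i) j ω) P
      = Measure.map (fun ω (i j : ℕ) => ξ i j ω) P)


/-!
Write `E` for the event that the unobserved entries land in the sets `A i j`, and
`f = ∏ i, ∏ j, μ_i(A i j)`. Since `f` is a function of the row distributions, it suffices to show
`∫_s 1_E = ∫_s f` for every `s` in the σ-algebra of the observed entries, and by a π-λ argument
only for cylinders `s = {ξ i j ∈ B i j for j < N i}`. Observed and unobserved entries occupy
disjoint positions of one block, so conditional independence given the `μ_i` factorizes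
`P[E ∩ s | μ] = f · P[s | μ]`; pulling the `μ`-measurable `f` out of `P[f · 1_s | μ]` shows that
both integrals equal `∫ f · P[s | μ]`.
-/

theorem setIntegral_eq_of_isPiSystem {α : Type*} {m0 : MeasurableSpace α} {ν : Measure α}
    {C : Set (Set α)} (hCm : ∀ s ∈ C, MeasurableSet s) (hC : IsPiSystem C)
    (huniv : Set.univ ∈ C) {f g : α → ℝ} (hf : Integrable f ν) (hg : Integrable g ν)
    (basic : ∀ s ∈ C, ∫ x in s, f x ∂ν = ∫ x in s, g x ∂ν) {s : Set α}
    (hs : MeasurableSet[MeasurableSpace.generateFrom C] s) :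
    ∫ x in s, f x ∂ν = ∫ x in s, g x ∂ν := by
  have hle : MeasurableSpace.generateFrom C ≤ m0 := MeasurableSpace.generateFrom_le hCm
  have hfg : ∫ x, f x ∂ν = ∫ x, g x ∂ν := by
    simpa only [setIntegral_univ] using basic _ huniv
  induction s, hs using MeasurableSpace.induction_on_inter rfl hC with
  | empty => simp
  | basic t ht => exact basic t ht
  | compl t ht ih =>
    have hf' := integral_add_compl (hle t ht) hf
    have hg' := integral_add_compl (hle t ht) hg
    linarith
  | iUnion t hdisj ht ih =>
    rw [integral_iUnion (fun n => hle _ (ht n)) hdisj hf.integrableOn,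
      integral_iUnion (fun n => hle _ (ht n)) hdisj hg.integrableOn]
    exact tsum_congr ih

theorem setIntegral_indicator_eq_of_condExp_inter {Ω : Type*} {m m0 : MeasurableSpace Ω}
    {P : Measure Ω} [IsFiniteMeasure P] (hm : m ≤ m0) {X Y : Set Ω}
    (hY : MeasurableSet Y) {u v : Ω → ℝ}
    (hu : StronglyMeasurable[m] u) (hu_int : Integrable u P)
    (hXY : P[(X ∩ Y).indicator fun _ => (1 : ℝ) | m] =ᵐ[P] u * v)
    (hYv : P[Y.indicator fun _ => (1 : ℝ) | m] =ᵐ[P] v) :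
    ∫ ω in Y, X.indicator (fun _ => (1 : ℝ)) ω ∂P = ∫ ω in Y, u ω ∂P := by
  have hY_int : Integrable (Y.indicator fun _ => (1 : ℝ)) P :=
    (integrable_const 1).indicator hY
  have huY : u * Y.indicator (fun _ => (1 : ℝ)) = Y.indicator u := by
    ext ω; by_cases hω : ω ∈ Y <;> simp [hω]
  calc ∫ ω in Y, X.indicator (fun _ => (1 : ℝ)) ω ∂P
      = ∫ ω, (X ∩ Y).indicator (fun _ => (1 : ℝ)) ω ∂P := by
        rw [← integral_indicator hY, Set.indicator_indicator, Set.inter_comm]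
    _ = ∫ ω, (u * v) ω ∂P := by rw [← integral_condExp hm]; exact integral_congr_ae hXY
    _ = ∫ ω, (u * P[Y.indicator fun _ => (1 : ℝ) | m]) ω ∂P :=
        integral_congr_ae (hYv.mono fun ω h => by simp [h])
    _ = ∫ ω, (u * Y.indicator (fun _ => (1 : ℝ))) ω ∂P := by
        have huY_int : Integrable (u * Y.indicator fun _ => (1 : ℝ)) P := by
          rw [huY]; exact hu_int.indicator hY
        rw [← integral_condExp hm (f := u * Y.indicator fun _ => (1 : ℝ))]
        exact integral_congr_ae (condExp_mul_of_stronglyMeasurable_left hu huY_int hY_int).symm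
    _ = ∫ ω in Y, u ω ∂P := by rw [huY, integral_indicator hY]

section RowArray

variable {Ω S : Type*}

def rowEvent (ξ : ℕ → ℕ → Ω → S) {m : ℕ} (t : Fin m → Finset ℕ) (C : Fin m → ℕ → Set S) :
    Set Ω :=
  {ω | ∀ i : Fin m, ∀ j ∈ t i, ξ i j ω ∈ C i j}

section

variable {ξ : ℕ → ℕ → Ω → S} {m : ℕ} {t t' : Fin m → Finset ℕ} {C C' : Fin m → ℕ → Set S}

theorem rowEvent_inter :
    rowEvent ξ t C ∩ rowEvent ξ t C' = rowEvent ξ t fun i j => C i j ∩ C' i j := by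
  ext ω
  simp only [rowEvent, Set.mem_inter_iff, Set.mem_ofPred_eq]
  exact ⟨fun ⟨h, h'⟩ i j hj => ⟨h i j hj, h' i j hj⟩,
    fun h => ⟨fun i j hj => (h i j hj).1, fun i j hj => (h i j hj).2⟩⟩

theorem rowEvent_union (h : ∀ i, Disjoint (t i) (t' i)) :
    rowEvent ξ (fun i => t i ∪ t' i) (fun i j => if j ∈ t i then C i j else C' i j)
      = rowEvent ξ t C ∩ rowEvent ξ t' C' := by
  ext ω
  simp only [rowEvent, Set.mem_ofPred_eq, Set.mem_inter_iff, Finset.mem_union]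
  refine ⟨fun hω => ⟨fun i j hj => ?_, fun i j hj => ?_⟩, fun ⟨h₁, h₂⟩ i j hj => ?_⟩
  · simpa [hj] using hω i j (.inl hj)
  · simpa [Finset.disjoint_right.mp (h i) hj] using hω i j (.inr hj)
  · by_cases hjt : j ∈ t i
    · simpa [hjt] using h₁ i j hjt
    · simpa [hjt] using h₂ i j (hj.resolve_left hjt)

end

variable [MeasurableSpace S]

def CondIIDRows {mΩ : MeasurableSpace Ω} (P : Measure Ω) (ξ : ℕ → ℕ → Ω → S)
    (μ : ℕ → Ω → Measure S) : Prop :=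
  ∀ (m n : ℕ) (A : Fin m → Fin n → Set S), (∀ i j, MeasurableSet (A i j)) →
    P[Set.indicator {ω | ∀ (i : Fin m) (j : Fin n), ξ (i : ℕ) (j : ℕ) ω ∈ A i j}
        (fun _ => (1:ℝ)) |
        MeasurableSpace.comap (fun ω (i : Fin m) => μ (i : ℕ) ω) inferInstance]
      =ᵐ[P] fun ω => ∏ i : Fin m, ∏ j : Fin n, ((μ (i : ℕ) ω) (A i j)).toReal

def rowProb (μ : ℕ → Ω → Measure S) {m : ℕ} (t : Fin m → Finset ℕ) (C : Fin m → ℕ → Set S)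
    (ω : Ω) : ℝ :=
  ∏ i : Fin m, ∏ j ∈ t i, ((μ i ω) (C i j)).toReal

def rowCylinders (ξ : ℕ → ℕ → Ω → S) {m : ℕ} (t : Fin m → Finset ℕ) : Set (Set Ω) :=
  {s | ∃ C : Fin m → ℕ → Set S, (∀ i j, MeasurableSet (C i j)) ∧ rowEvent ξ t C = s}

variable {ξ : ℕ → ℕ → Ω → S} {μ : ℕ → Ω → Measure S} {m : ℕ} {t t' : Fin m → Finset ℕ}
  {C C' : Fin m → ℕ → Set S}

theorem measurableSet_rowEvent {mΩ : MeasurableSpace Ω} (hξ : ∀ i j, Measurable (ξ i j))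
    (hC : ∀ i, ∀ j ∈ t i, MeasurableSet (C i j)) : MeasurableSet (rowEvent ξ t C) := by
  have h : rowEvent ξ t C = ⋂ i, ⋂ j ∈ t i, ξ i j ⁻¹' C i j := by
    ext ω; simp [rowEvent]
  rw [h]
  exact .iInter fun i => .biInter (t i).countable_toSet fun j hj => hξ _ _ (hC i j hj)

theorem measurable_rowProb (hC : ∀ i, ∀ j ∈ t i, MeasurableSet (C i j)) :
    Measurable[MeasurableSpace.comap (fun ω (i : Fin m) => μ i ω) inferInstance]
      (rowProb μ t C) := by
  have hμ : Measurable[MeasurableSpace.comap (fun ω (i : Fin m) => μ i ω) inferInstance]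
      (fun ω (i : Fin m) => μ i ω) := Measurable.of_comap_le le_rfl
  refine Finset.measurable_prod _ fun i _ => Finset.measurable_prod _ fun j hj => ?_
  exact ((Measure.measurable_coe (hC i j hj)).comp ((measurable_pi_apply i).comp hμ)).ennreal_toReal

theorem rowProb_mem_Icc (hμp : ∀ i ω, IsProbabilityMeasure (μ i ω)) (ω : Ω) :
    rowProb μ t C ω ∈ Set.Icc 0 1 :=
  ⟨Finset.prod_nonneg fun _ _ => Finset.prod_nonneg fun _ _ => ENNReal.toReal_nonneg,
    Finset.prod_le_one (fun _ _ => Finset.prod_nonneg fun _ _ => ENNReal.toReal_nonneg)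
      fun _ _ => Finset.prod_le_one (fun _ _ => ENNReal.toReal_nonneg) fun _ _ =>
        measureReal_le_one⟩

theorem integrable_rowProb {mΩ : MeasurableSpace Ω} {P : Measure Ω} [IsFiniteMeasure P]
    (hμm : ∀ i, Measurable (μ i)) (hμp : ∀ i ω, IsProbabilityMeasure (μ i ω))
    (hC : ∀ i, ∀ j ∈ t i, MeasurableSet (C i j)) :
    Integrable (rowProb μ t C) P := by
  have hle : MeasurableSpace.comap (fun ω (i : Fin m) => μ i ω) inferInstance ≤ ‹_› :=
    (measurable_pi_lambda (fun ω (i : Fin m) => μ i ω) fun i => hμm i).comap_le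
  refine Integrable.of_bound ((measurable_rowProb hC).mono hle le_rfl).aestronglyMeasurable 1
    (.of_forall fun ω => ?_)
  obtain ⟨h0, h1⟩ := rowProb_mem_Icc (t := t) (C := C) hμp ω
  rwa [Real.norm_of_nonneg h0]

theorem rowProb_union (h : ∀ i, Disjoint (t i) (t' i)) :
    rowProb μ (fun i => t i ∪ t' i) (fun i j => if j ∈ t i then C i j else C' i j)
      = rowProb μ t C * rowProb μ t' C' := by
  ext ω
  simp only [rowProb, Pi.mul_apply, ← Finset.prod_mul_distrib]
  refine Finset.prod_congr rfl fun i _ => ?_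
  rw [Finset.prod_union (h i)]
  congr 1
  · exact Finset.prod_congr rfl fun j hj => by simp [hj]
  · exact Finset.prod_congr rfl fun j hj => by simp [Finset.disjoint_right.mp (h i) hj]

theorem condExp_indicator_rowEvent {mΩ : MeasurableSpace Ω} {P : Measure Ω}
    (hcond : CondIIDRows P ξ μ) (hμp : ∀ i ω, IsProbabilityMeasure (μ i ω))
    (hC : ∀ i, ∀ j ∈ t i, MeasurableSet (C i j)) :
    P[(rowEvent ξ t C).indicator fun _ => (1 : ℝ) |
        MeasurableSpace.comap (fun ω (i : Fin m) => μ i ω) inferInstance]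
      =ᵐ[P] rowProb μ t C := by
  classical
  -- pad `t` to a full `m × n` block with `univ`, which costs factors `μ_i(univ) = 1`
  obtain ⟨n, hn⟩ := Finset.exists_nat_subset_range (Finset.univ.biUnion t)
  have htn : ∀ i, t i ⊆ Finset.range n :=
    fun i => (Finset.subset_biUnion_of_mem t (Finset.mem_univ i)).trans hn
  let A : Fin m → Fin n → Set S := fun i j => if (j : ℕ) ∈ t i then C i j else Set.univ
  have hA : ∀ i j, MeasurableSet (A i j) := fun i j => by
    by_cases hj : (j : ℕ) ∈ t i
    · simpa [A, hj] using hC i j hj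
    · simp [A, hj]
  have hevent : {ω | ∀ (i : Fin m) (j : Fin n), ξ i j ω ∈ A i j} = rowEvent ξ t C := by
    ext ω
    simp only [rowEvent, Set.mem_ofPred_eq, A]
    refine ⟨fun hω i j hj => ?_, fun hω i j => ?_⟩
    · simpa [hj] using hω i ⟨j, Finset.mem_range.mp (htn i hj)⟩
    · split_ifs with hj
      · exact hω i j hj
      · trivial
  have hprob : ∀ ω, ∏ i : Fin m, ∏ j : Fin n, ((μ i ω) (A i j)).toReal = rowProb μ t C ω := by
    intro ω
    refine Finset.prod_congr rfl fun i _ => ?_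
    rw [Fin.prod_univ_eq_prod_range
        (fun j => ((μ i ω) (if j ∈ t i then C i j else .univ)).toReal),
      ← Finset.prod_subset (htn i) fun j _ hj => by simp [hj]]
    exact Finset.prod_congr rfl fun j hj => by simp [hj]
  have h := hcond m n A hA
  rw [hevent] at h
  exact h.trans (.of_forall hprob)

theorem isPiSystem_rowCylinders : IsPiSystem (rowCylinders ξ t) := by
  rintro _ ⟨C, hC, rfl⟩ _ ⟨C', hC', rfl⟩ -
  exact ⟨_, fun i j => (hC i j).inter (hC' i j), rowEvent_inter.symm⟩

theorem univ_mem_rowCylinders : Set.univ ∈ rowCylinders ξ t :=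
  ⟨fun _ _ => Set.univ, fun _ _ => .univ, by ext; simp [rowEvent]⟩

theorem measurableSet_of_mem_rowCylinders {mΩ : MeasurableSpace Ω}
    (hξ : ∀ i j, Measurable (ξ i j)) {s : Set Ω} (hs : s ∈ rowCylinders ξ t) : MeasurableSet s := by
  obtain ⟨C, hC, rfl⟩ := hs
  exact measurableSet_rowEvent hξ fun i j _ => hC i j

theorem comap_entries_le {mΩ : MeasurableSpace Ω} {N : Fin m → ℕ}
    (hξ : ∀ i j, Measurable (ξ i j)) :
    MeasurableSpace.comap (fun ω (i : Fin m) (j : Fin (N i)) => ξ i j ω) inferInstance ≤ mΩ :=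
  (measurable_pi_lambda (fun ω (i : Fin m) (j : Fin (N i)) => ξ i j ω) fun i =>
    measurable_pi_lambda _ fun j => hξ i j).comap_le

theorem comap_le_generateFrom_rowCylinders {N : Fin m → ℕ} :
    MeasurableSpace.comap (fun ω (i : Fin m) (j : Fin (N i)) => ξ i j ω) inferInstance
      ≤ MeasurableSpace.generateFrom (rowCylinders ξ fun i => Finset.range (N i)) := by
  classical
  let _ : MeasurableSpace Ω :=
    MeasurableSpace.generateFrom (rowCylinders ξ fun i => Finset.range (N i))
  refine measurable_iff_comap_le.mp
    (measurable_pi_lambda _ fun i => measurable_pi_lambda _ fun j => fun B hB => ?_)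
  refine MeasurableSpace.measurableSet_generateFrom
    ⟨fun i' j' => if i' = i ∧ j' = j then B else Set.univ, fun _ _ => ?_, ?_⟩
  · dsimp only; split_ifs <;> simp [hB]
  · ext ω
    simp only [rowEvent, Set.mem_ofPred_eq, Set.mem_preimage]
    refine ⟨fun h => by simpa using h i j (Finset.mem_range.mpr j.2), fun h i' j' _ => ?_⟩
    split_ifs with hij
    · obtain ⟨rfl, rfl⟩ := hij; exact h
    · trivial

theorem setIntegral_indicator_rowEvent_eq {mΩ : MeasurableSpace Ω} {P : Measure Ω}
    [IsFiniteMeasure P] (hξ : ∀ i j, Measurable (ξ i j))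
    (hμm : ∀ i, Measurable (μ i)) (hμp : ∀ i ω, IsProbabilityMeasure (μ i ω))
    (hcond : CondIIDRows P ξ μ) (hC : ∀ i, ∀ j ∈ t i, MeasurableSet (C i j))
    (hdisj : ∀ i, Disjoint (t i) (t' i)) {s : Set Ω} (hs : s ∈ rowCylinders ξ t') :
    ∫ ω in s, (rowEvent ξ t C).indicator (fun _ => (1 : ℝ)) ω ∂P
      = ∫ ω in s, rowProb μ t C ω ∂P := by
  classical
  obtain ⟨C', hC', rfl⟩ := hs
  have hle : MeasurableSpace.comap (fun ω (i : Fin m) => μ i ω) inferInstance ≤ ‹_› :=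
    (measurable_pi_lambda (fun ω (i : Fin m) => μ i ω) fun i => hμm i).comap_le
  have hC'' : ∀ i, ∀ j ∈ t i ∪ t' i, MeasurableSet (if j ∈ t i then C i j else C' i j) :=
    fun i j hj => by split_ifs with hjt; exacts [hC i j hjt, hC' i j]
  refine setIntegral_indicator_eq_of_condExp_inter hle
    (measurableSet_rowEvent hξ fun i j _ => hC' i j) (measurable_rowProb hC).stronglyMeasurable
    (integrable_rowProb hμm hμp hC) ?_ (condExp_indicator_rowEvent hcond hμp fun i j _ => hC' i j)
  rw [← rowEvent_union hdisj, ← rowProb_union hdisj]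
  exact condExp_indicator_rowEvent hcond hμp hC''

end RowArray

/-- Posterior prediction depends on the data only through the row distributions: for any
sub-σ-algebra `𝒢` of the σ-algebra generated by the observed entries,
`P(⋂_i ⋂_{N_i < j ≤ O_i} {ξ_{ij} ∈ A_{ij}} | 𝒢) = E[∏_i ∏_{N_i < j ≤ O_i} μ_i(A_{ij}) | 𝒢]`. -/
theorem stmt18 {Ω S : Type*} [MeasurableSpace Ω]
    [MetricSpace S] [CompleteSpace S] [SeparableSpace S] [MeasurableSpace S] [BorelSpace S]
    (P : Measure Ω) [IsProbabilityMeasure P]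
    (ξ : ℕ → ℕ → Ω → S) (hξ : ∀ i j, Measurable (ξ i j))
    (hre : RowExchangeable P ξ)
    (μ : ℕ → Ω → Measure S) (hμm : ∀ i, Measurable (μ i))
    (hμp : ∀ i ω, IsProbabilityMeasure (μ i ω))
    -- conditionally on `μ₁,…,μ_m`, the entries of each `m × n` block are independent with
    -- `ξ_{ij} ∼ μ_i`  (i.e. `L(X_{mn} | μ₁,…,μ_m) = ∏ μ_i^n`)
    (hcond : ∀ (m n : ℕ) (A : Fin m → Fin n → Set S), (∀ i j, MeasurableSet (A i j)) →
      P[Set.indicator {ω | ∀ (i : Fin m) (j : Fin n), ξ (i : ℕ) (j : ℕ) ω ∈ A i j}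
          (fun _ => (1:ℝ)) |
          MeasurableSpace.comap (fun ω (i : Fin m) => μ (i : ℕ) ω) inferInstance]
        =ᵐ[P] fun ω => ∏ i : Fin m, ∏ j : Fin n, ((μ (i : ℕ) ω) (A i j)).toReal)
    (M : ℕ) (N O : Fin M → ℕ) (hNO : ∀ i, N i < O i)
    (A : Fin M → ℕ → Set S) (hA : ∀ (i : Fin M), ∀ j ∈ Finset.Ico (N i) (O i), MeasurableSet (A i j))
    (G : MeasurableSpace Ω)
    (hG : G ≤ MeasurableSpace.comap
      (fun ω => fun (i : Fin M) (j : Fin (N i)) => ξ (i : ℕ) (j : ℕ) ω) inferInstance) :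
    P[Set.indicator {ω | ∀ i : Fin M, ∀ j ∈ Finset.Ico (N i) (O i), ξ (i : ℕ) j ω ∈ A i j}
        (fun _ => (1:ℝ)) | G]
      =ᵐ[P]
    P[fun ω => ∏ i : Fin M, ∏ j ∈ Finset.Ico (N i) (O i), ((μ (i : ℕ) ω) (A i j)).toReal | G] := by
  have hGle := hG.trans (comap_entries_le hξ)
  have hdisj : ∀ i, Disjoint (Finset.Ico (N i) (O i)) (Finset.range (N i)) := fun i => by
    rw [Finset.range_eq_Ico]; exact (Finset.Ico_disjoint_Ico_consecutive 0 (N i) (O i)).symm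
  have hE_int : Integrable
      ((rowEvent ξ (fun i => Finset.Ico (N i) (O i)) A).indicator fun _ => (1 : ℝ)) P :=
    (integrable_const 1).indicator (measurableSet_rowEvent hξ hA)
  refine (ae_eq_condExp_of_forall_setIntegral_eq hGle hE_int
    (fun _ _ _ => integrable_condExp.integrableOn) (fun s hs _ => ?_)
    stronglyMeasurable_condExp.aestronglyMeasurable).symm
  change ∫ ω in s, P[rowProb μ (fun i => Finset.Ico (N i) (O i)) A | G] ω ∂P = _
  rw [setIntegral_condExp hGle (integrable_rowProb hμm hμp hA) hs]
  exact (setIntegral_eq_of_isPiSystem (fun _ => measurableSet_of_mem_rowCylinders hξ)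
    isPiSystem_rowCylinders univ_mem_rowCylinders hE_int (integrable_rowProb hμm hμp hA)
    (fun s hs => setIntegral_indicator_rowEvent_eq hξ hμm hμp hcond hA hdisj hs)
    (comap_le_generateFrom_rowCylinders s (hG s hs))).symm
end
end

section
/- Let ξ be a row exchangeable array with row distributions (μ_i). Fix m < M and N ∈ ℕ. Then the block X = {ξ_{ij} : i ≤ m, j ≤ N} and the collection {(μ_i, (ξ_{ij})_{j≤N}) : m < i ≤ M} are conditionally independent given (μ₁,...,μ_m). -/
open MeasureTheory ProbabilityTheory TopologicalSpace

noncomputable section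

/-!
Let `G ≤ H` be the σ-algebras generated by the first `m`, resp. `M`, row distributions. Given `H`,
the entries of the first `M` rows are independent with `ξ i j ∼ μ i`, so for block events `E` in
rows `< m` and `D` in rows `m, …, M - 1` we get `P(E ∩ D | H) = P(E | G) · P(D | H)`: indeed
`P(E | H) = ∏ μ i (a i j)` is already `G`-measurable. Integrating over `F ∩ C` with `F ∈ H`,
`C ∈ G`, and pulling out `P(E | G)` gives `P(E ∩ (F ∩ D) ∩ C) = ∫_{C ∩ F ∩ D} P(E | G)`, i.e. `E`
and `F ∩ D` are conditionally independent given `G`. These events form π-systems generating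
σ-algebras for which the block `X`, resp. the collection `Y`, is measurable, and conditional
independence passes from π-systems to the generated σ-algebras by Dynkin's theorem: for fixed `E`,
both sides of the set-integral identity are finite measures in the second event.
-/

section IndepGiven

variable {Ω : Type*} {m m₀ : MeasurableSpace Ω} {P : Measure Ω}

/-- Unlike `ProbabilityTheory.CondIndepSet`, this needs no standard Borel structure on `Ω`. -/
def IndepGiven (m : MeasurableSpace Ω) {m₀ : MeasurableSpace Ω} (P : Measure[m₀] Ω)
    (E F : Set Ω) : Prop :=
  P⟦E ∩ F | m⟧ =ᵐ[P] P⟦E | m⟧ * P⟦F | m⟧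

lemma IndepGiven.symm {E F : Set Ω} (h : IndepGiven m P E F) : IndepGiven m P F E := by
  rw [IndepGiven, Set.inter_comm, mul_comm]
  exact h

lemma setIntegral_indicator_one (C : Set Ω) {E : Set Ω} (hE : MeasurableSet E) :
    ∫ ω in C, E.indicator (fun _ => (1 : ℝ)) ω ∂P = P.real (E ∩ C) := by
  rw [integral_indicator_const _ hE, measureReal_restrict_apply hE, smul_eq_mul, mul_one]

variable [IsFiniteMeasure P]

lemma setIntegral_condExp_indicator_one (hm : m ≤ m₀) {E C : Set Ω} (hE : MeasurableSet E)
    (hC : MeasurableSet[m] C) : ∫ ω in C, (P⟦E | m⟧) ω ∂P = P.real (E ∩ C) := by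
  rw [setIntegral_condExp hm ((integrable_const _).indicator hE) hC,
    setIntegral_indicator_one C hE]

lemma norm_condExp_indicator_one_le (hm : m ≤ m₀) {E : Set Ω} (hE : MeasurableSet E) :
    ∀ᵐ ω ∂P, ‖(P⟦E | m⟧) ω‖ ≤ 1 := by
  have h0 : 0 ≤ᵐ[P] P⟦E | m⟧ :=
    condExp_nonneg (.of_forall fun ω => Set.indicator_nonneg (fun _ _ => zero_le_one) ω)
  have h1 : P⟦E | m⟧ ≤ᵐ[P] P[fun _ => (1 : ℝ) | m] :=
    condExp_mono ((integrable_const _).indicator hE) (integrable_const _)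
      (.of_forall fun ω => Set.indicator_le_self' (fun _ _ => zero_le_one) ω)
  rw [condExp_const hm] at h1
  filter_upwards [h0, h1] with ω h0 h1
  rwa [Real.norm_eq_abs, abs_of_nonneg h0]

lemma setIntegral_mul_condExp_indicator_one (hm : m ≤ m₀) {k : Ω → ℝ}
    (hk : StronglyMeasurable[m] k) {c : ℝ} (hkc : ∀ᵐ ω ∂P, ‖k ω‖ ≤ c) {s D : Set Ω}
    (hs : MeasurableSet[m] s) (hD : MeasurableSet D) :
    ∫ ω in s, k ω * (P⟦D | m⟧) ω ∂P = ∫ ω in s ∩ D, k ω ∂P := by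
  have hD1 : Integrable (D.indicator fun _ => (1 : ℝ)) P := (integrable_const _).indicator hD
  have hkD : Integrable (fun ω => k ω * D.indicator (fun _ => (1 : ℝ)) ω) P :=
    hD1.bdd_mul (hk.mono hm).aestronglyMeasurable hkc
  calc ∫ ω in s, k ω * (P⟦D | m⟧) ω ∂P
      = ∫ ω in s, P[fun ω => k ω * D.indicator (fun _ => (1 : ℝ)) ω | m] ω ∂P :=
        setIntegral_congr_ae (hm s hs)
          ((condExp_mul_of_stronglyMeasurable_left hk hkD hD1).mono fun ω h _ => h.symm)
    _ = ∫ ω in s, D.indicator k ω ∂P := by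
        rw [setIntegral_condExp hm hkD hs]
        simp only [← Set.indicator_mul_right, mul_one]
    _ = ∫ ω in s ∩ D, k ω ∂P := setIntegral_indicator hD

lemma indepGiven_iff_setIntegral (hm : m ≤ m₀) {E F : Set Ω} (hE : MeasurableSet E)
    (hF : MeasurableSet F) :
    IndepGiven m P E F ↔
      ∀ C, MeasurableSet[m] C → ∫ ω in C ∩ F, (P⟦E | m⟧) ω ∂P = P.real (E ∩ F ∩ C) := by
  have hprod : ∀ C, MeasurableSet[m] C →
      ∫ ω in C, (P⟦E | m⟧ * P⟦F | m⟧) ω ∂P = ∫ ω in C ∩ F, (P⟦E | m⟧) ω ∂P := fun C hC =>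
    setIntegral_mul_condExp_indicator_one hm stronglyMeasurable_condExp
      (norm_condExp_indicator_one_le hm hE) hC hF
  constructor
  · intro h C hC
    rw [← hprod C hC, ← setIntegral_condExp_indicator_one hm (hE.inter hF) hC]
    exact setIntegral_congr_ae (hm C hC) (h.mono fun ω hω _ => hω.symm)
  · intro h
    refine (ae_eq_condExp_of_forall_setIntegral_eq hm
      ((integrable_const _).indicator (hE.inter hF)) (fun C _ _ => ?_) (fun C hC _ => ?_)
      (stronglyMeasurable_condExp.mul stronglyMeasurable_condExp).aestronglyMeasurable).symm
    · exact (integrable_condExp.bdd_mul (stronglyMeasurable_condExp.mono hm).aestronglyMeasurable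
        (norm_condExp_indicator_one_le hm hE)).integrableOn
    · rw [hprod C hC, h C hC, setIntegral_indicator_one C (hE.inter hF)]

lemma IndepGiven.of_isPiSystem_right (hm : m ≤ m₀) {E : Set Ω} (hE : MeasurableSet E)
    {p : Set (Set Ω)} (hp : IsPiSystem p) (hpm : ∀ F ∈ p, MeasurableSet F)
    (h : ∀ F ∈ p, IndepGiven m P E F) {F : Set Ω}
    (hF : MeasurableSet[MeasurableSpace.generateFrom p] F) : IndepGiven m P E F := by
  have hgen : MeasurableSpace.generateFrom p ≤ m₀ := MeasurableSpace.generateFrom_le hpm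
  rw [indepGiven_iff_setIntegral hm hE (hgen F hF)]
  intro C hC
  have hE0 : 0 ≤ᵐ[P] P⟦E | m⟧ :=
    condExp_nonneg (.of_forall fun ω => Set.indicator_nonneg (fun _ _ => zero_le_one) ω)
  -- Both sides, as functions of `F`, are finite measures.
  set ν₁ := P.restrict (E ∩ C)
  set ν₂ := (P.restrict C).withDensity fun ω => ENNReal.ofReal ((P⟦E | m⟧) ω)
  have hν : ∀ F, MeasurableSet F →
      (ν₁ F = ν₂ F ↔ ∫ ω in C ∩ F, (P⟦E | m⟧) ω ∂P = P.real (E ∩ F ∩ C)) := by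
    intro F hF
    rw [Measure.restrict_apply hF, withDensity_apply _ hF, Measure.restrict_restrict hF,
      Set.inter_comm F C, ← ofReal_integral_eq_lintegral_ofReal integrable_condExp.restrict
        (ae_restrict_of_ae hE0), eq_comm, ← ofReal_measureReal,
      ENNReal.ofReal_eq_ofReal_iff (integral_nonneg_of_ae (ae_restrict_of_ae hE0))
        measureReal_nonneg, Set.inter_left_comm, ← Set.inter_assoc]
  refine (hν F (hgen F hF)).1 (ext_on_measurableSpace_of_generate_finite m₀ p
    (fun F hF => (hν F (hpm F hF)).2 ?_) hgen rfl hp ((hν _ .univ).2 ?_) hF)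
  · exact (indepGiven_iff_setIntegral hm hE (hpm F hF)).1 (h F hF) C hC
  · rw [Set.inter_univ, Set.inter_univ, setIntegral_condExp_indicator_one hm hE hC]

lemma IndepGiven.of_isPiSystem (hm : m ≤ m₀) {p q : Set (Set Ω)} (hp : IsPiSystem p)
    (hq : IsPiSystem q) (hpm : ∀ E ∈ p, MeasurableSet E) (hqm : ∀ F ∈ q, MeasurableSet F)
    (h : ∀ E ∈ p, ∀ F ∈ q, IndepGiven m P E F) {E F : Set Ω}
    (hE : MeasurableSet[MeasurableSpace.generateFrom p] E)
    (hF : MeasurableSet[MeasurableSpace.generateFrom q] F) : IndepGiven m P E F := by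
  refine (IndepGiven.of_isPiSystem_right hm (MeasurableSpace.generateFrom_le hqm F hF) hp hpm
    (fun E' hE' => ?_) hE).symm
  exact (IndepGiven.of_isPiSystem_right hm (hpm E' hE') hq hqm (h E' hE') hF).symm

lemma indepGiven_inter_of_condExp_inter_ae_eq {m' : MeasurableSpace Ω} (hmm' : m ≤ m')
    (hm' : m' ≤ m₀) {E D F : Set Ω} (hE : MeasurableSet[m₀] E) (hD : MeasurableSet[m₀] D)
    (hF : MeasurableSet[m'] F) (h : P⟦E ∩ D | m'⟧ =ᵐ[P] P⟦E | m⟧ * P⟦D | m'⟧) :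
    IndepGiven m P E (F ∩ D) := by
  rw [indepGiven_iff_setIntegral (hmm'.trans hm') hE ((hm' F hF).inter hD)]
  intro C hC
  have hFC : MeasurableSet[m'] (F ∩ C) := hF.inter (hmm' C hC)
  calc ∫ ω in C ∩ (F ∩ D), (P⟦E | m⟧) ω ∂P = ∫ ω in F ∩ C ∩ D, (P⟦E | m⟧) ω ∂P := by
        rw [Set.inter_left_comm, ← Set.inter_assoc]
    _ = ∫ ω in F ∩ C, (P⟦E | m⟧) ω * (P⟦D | m'⟧) ω ∂P :=
        (setIntegral_mul_condExp_indicator_one hm' (stronglyMeasurable_condExp.mono hmm')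
          (norm_condExp_indicator_one_le (hmm'.trans hm') hE) hFC hD).symm
    _ = ∫ ω in F ∩ C, (P⟦E ∩ D | m'⟧) ω ∂P :=
        setIntegral_congr_ae (hm' _ hFC) (h.mono fun ω hω _ => hω.symm)
    _ = P.real (E ∩ (F ∩ D) ∩ C) := by
        rw [setIntegral_condExp_indicator_one hm' (hE.inter hD) hFC]
        congr 1
        ext ω
        simp only [Set.mem_inter_iff]
        tauto

end IndepGiven

lemma IsPiSystem.image2_inter {α : Type*} {p q : Set (Set α)} (hp : IsPiSystem p)
    (hq : IsPiSystem q) : IsPiSystem (Set.image2 (· ∩ ·) p q) := by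
  rintro _ ⟨s₁, hs₁, t₁, ht₁, rfl⟩ _ ⟨s₂, hs₂, t₂, ht₂, rfl⟩ hne
  rw [Set.inter_inter_inter_comm] at hne ⊢
  exact ⟨_, hp _ hs₁ _ hs₂ (hne.mono Set.inter_subset_left),
    _, hq _ ht₁ _ ht₂ (hne.mono Set.inter_subset_right), rfl⟩

section RowArray

open Finset

variable {Ω S : Type*}

abbrev rowLawsSigma [MeasurableSpace S] (μ : ℕ → Ω → Measure S) (m : ℕ) : MeasurableSpace Ω :=
  MeasurableSpace.comap (fun ω (i : Fin m) => μ (i : ℕ) ω) inferInstance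

def IsDirectingRowLaws [MeasurableSpace Ω] [MeasurableSpace S] (P : Measure Ω)
    (ξ : ℕ → ℕ → Ω → S) (μ : ℕ → Ω → Measure S) : Prop :=
  ∀ (m n : ℕ) (A : Fin m → Fin n → Set S), (∀ i j, MeasurableSet (A i j)) →
    P⟦{ω | ∀ (i : Fin m) (j : Fin n), ξ (i : ℕ) (j : ℕ) ω ∈ A i j} | rowLawsSigma μ m⟧
      =ᵐ[P] fun ω => ∏ i : Fin m, ∏ j : Fin n, ((μ (i : ℕ) ω) (A i j)).toReal

def blockEvent (ξ : ℕ → ℕ → Ω → S) (I : Finset ℕ) (N : ℕ) (a : ℕ → ℕ → Set S) : Set Ω :=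
  {ω | ∀ i ∈ I, ∀ j < N, ξ i j ω ∈ a i j}

def blockEvents [MeasurableSpace S] (ξ : ℕ → ℕ → Ω → S) (I : Finset ℕ) (N : ℕ) :
    Set (Set Ω) :=
  {E | ∃ a : ℕ → ℕ → Set S, (∀ i j, MeasurableSet (a i j)) ∧ blockEvent ξ I N a = E}

def lawBlockEvents [MeasurableSpace S] (μ : ℕ → Ω → Measure S) (ξ : ℕ → ℕ → Ω → S)
    (m M N : ℕ) : Set (Set Ω) :=
  Set.image2 (· ∩ ·) {F | MeasurableSet[rowLawsSigma μ M] F} (blockEvents ξ (Ico m M) N)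

section rowLawsSigma

variable [MeasurableSpace S] {μ : ℕ → Ω → Measure S}

lemma rowLawsSigma_le [MeasurableSpace Ω] (hμ : ∀ i, Measurable (μ i)) (m : ℕ) :
    rowLawsSigma μ m ≤ ‹MeasurableSpace Ω› :=
  (measurable_pi_lambda _ fun i : Fin m => hμ i).comap_le

lemma measurable_rowLawsSigma {i M : ℕ} (hi : i < M) : Measurable[rowLawsSigma μ M] (μ i) :=
  (measurable_pi_apply (⟨i, hi⟩ : Fin M)).comp
    (Measurable.of_comap_le (f := fun ω (k : Fin M) => μ k ω) le_rfl)

lemma rowLawsSigma_mono {m M : ℕ} (h : m ≤ M) : rowLawsSigma μ m ≤ rowLawsSigma μ M :=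
  (@measurable_pi_lambda _ _ _ (rowLawsSigma μ M) _ _ fun i : Fin m =>
    measurable_rowLawsSigma (i.2.trans_le h)).comap_le

end rowLawsSigma

section blockEvent

variable {ξ : ℕ → ℕ → Ω → S} {I J : Finset ℕ} {N : ℕ}

lemma blockEvent_congr {a b : ℕ → ℕ → Set S} (h : ∀ i ∈ I, a i = b i) :
    blockEvent ξ I N a = blockEvent ξ I N b := by
  ext ω
  simp +contextual only [blockEvent, Set.mem_ofPred_eq, h]

lemma blockEvent_inter (a b : ℕ → ℕ → Set S) :
    blockEvent ξ I N a ∩ blockEvent ξ I N b = blockEvent ξ I N (fun i j => a i j ∩ b i j) := by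
  ext ω
  simp only [blockEvent, Set.mem_inter_iff, Set.mem_ofPred_eq]
  grind

lemma blockEvent_union (a : ℕ → ℕ → Set S) :
    blockEvent ξ I N a ∩ blockEvent ξ J N a = blockEvent ξ (I ∪ J) N a := by
  ext ω
  simp only [blockEvent, Set.mem_inter_iff, Set.mem_ofPred_eq, mem_union]
  grind

variable [MeasurableSpace S]

lemma measurableSet_blockEvent [MeasurableSpace Ω] (hξ : ∀ i j, Measurable (ξ i j))
    {a : ℕ → ℕ → Set S} (ha : ∀ i j, MeasurableSet (a i j)) :
    MeasurableSet (blockEvent ξ I N a) := by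
  simp only [blockEvent, Set.ofPred_forall]
  exact .iInter fun i => .iInter fun _ => .iInter fun j => .iInter fun _ => hξ i j (ha i j)

lemma measurableSet_of_mem_blockEvents [MeasurableSpace Ω] (hξ : ∀ i j, Measurable (ξ i j))
    {E : Set Ω} (hE : E ∈ blockEvents ξ I N) : MeasurableSet E := by
  obtain ⟨a, ha, rfl⟩ := hE
  exact measurableSet_blockEvent hξ ha

lemma univ_mem_blockEvents : Set.univ ∈ blockEvents ξ I N :=
  ⟨fun _ _ => Set.univ, fun _ _ => .univ, by ext; simp [blockEvent]⟩

lemma isPiSystem_blockEvents : IsPiSystem (blockEvents ξ I N) := by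
  rintro _ ⟨a, ha, rfl⟩ _ ⟨b, hb, rfl⟩ -
  exact ⟨_, fun i j => (ha i j).inter (hb i j), (blockEvent_inter a b).symm⟩

lemma measurable_generateFrom_blockEvents {i j : ℕ} (hi : i ∈ I) (hj : j < N) :
    Measurable[MeasurableSpace.generateFrom (blockEvents ξ I N)] (ξ i j) := by
  intro s hs
  refine MeasurableSpace.measurableSet_generateFrom
    ⟨fun i' j' => if i' = i ∧ j' = j then s else Set.univ, fun _ _ => ?_, ?_⟩
  · dsimp only
    split_ifs
    exacts [hs, .univ]
  · ext ω
    simp only [blockEvent, Set.mem_ofPred_eq, Set.mem_preimage]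
    constructor
    · intro h
      simpa using h i hi j hj
    · intro h i' _ j' _
      split_ifs with h'
      · rwa [h'.1, h'.2]
      · trivial

lemma measurable_block_generateFrom_blockEvents {m : ℕ} :
    Measurable[MeasurableSpace.generateFrom (blockEvents ξ (range m) N)]
      fun ω (i : Fin m) (j : Fin N) => ξ i j ω :=
  @measurable_pi_lambda _ _ _ (_) _ _ fun i => @measurable_pi_lambda _ _ _ (_) _ _ fun j =>
    measurable_generateFrom_blockEvents (mem_range.2 i.2) j.2

variable {μ : ℕ → Ω → Measure S} {m M : ℕ}

lemma measurableSet_of_mem_lawBlockEvents [MeasurableSpace Ω] (hξ : ∀ i j, Measurable (ξ i j))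
    (hμ : ∀ i, Measurable (μ i)) {E : Set Ω} (hE : E ∈ lawBlockEvents μ ξ m M N) :
    MeasurableSet E := by
  obtain ⟨F, hF, D, hD, rfl⟩ := hE
  exact (rowLawsSigma_le hμ M F hF).inter (measurableSet_of_mem_blockEvents hξ hD)

lemma isPiSystem_lawBlockEvents : IsPiSystem (lawBlockEvents μ ξ m M N) :=
  (@MeasurableSpace.isPiSystem_measurableSet Ω (rowLawsSigma μ M)).image2_inter
    isPiSystem_blockEvents

lemma measurable_rows_generateFrom_lawBlockEvents :
    Measurable[MeasurableSpace.generateFrom (lawBlockEvents μ ξ m M N)]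
      fun ω (k : Fin (M - m)) => (μ (m + k) ω, fun j : Fin N => ξ (m + k) j ω) := by
  have hlaws : rowLawsSigma μ M ≤ MeasurableSpace.generateFrom (lawBlockEvents μ ξ m M N) :=
    fun F hF => MeasurableSpace.measurableSet_generateFrom
      ⟨F, hF, _, univ_mem_blockEvents, Set.inter_univ F⟩
  have hblocks : MeasurableSpace.generateFrom (blockEvents ξ (Ico m M) N)
      ≤ MeasurableSpace.generateFrom (lawBlockEvents μ ξ m M N) :=
    MeasurableSpace.generateFrom_mono fun E hE =>
      ⟨_, @MeasurableSet.univ Ω (rowLawsSigma μ M), E, hE, Set.univ_inter E⟩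
  refine @measurable_pi_lambda _ _ _ (_) _ _ fun k => ?_
  have hk : m + k < M := by omega
  refine Measurable.prodMk ((measurable_rowLawsSigma hk).mono hlaws le_rfl)
    (@measurable_pi_lambda _ _ _ (_) _ _ fun j => ?_)
  exact (measurable_generateFrom_blockEvents
    (mem_Ico.2 ⟨Nat.le_add_right m k, hk⟩) j.2).mono hblocks le_rfl

end blockEvent

section condExp

variable [MeasurableSpace Ω] [MeasurableSpace S] {P : Measure Ω} {ξ : ℕ → ℕ → Ω → S}
  {μ : ℕ → Ω → Measure S} {N : ℕ} {a : ℕ → ℕ → Set S}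

lemma condExp_blockEvent (hcond : IsDirectingRowLaws P ξ μ)
    (hμp : ∀ i ω, IsProbabilityMeasure (μ i ω)) (ha : ∀ i j, MeasurableSet (a i j))
    {I : Finset ℕ} {M : ℕ} (hI : I ⊆ range M) :
    P⟦blockEvent ξ I N a | rowLawsSigma μ M⟧
      =ᵐ[P] fun ω => ∏ i ∈ I, ∏ j ∈ range N, (μ i ω (a i j)).toReal := by
  -- pad `a` with `univ` outside `I`: those rows contribute factors `μ i univ = 1`
  set a' : ℕ → ℕ → Set S := fun i j => if i ∈ I then a i j else Set.univ
  have hevent : {ω | ∀ (i : Fin M) (j : Fin N), ξ i j ω ∈ a' i j} = blockEvent ξ I N a := by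
    ext ω
    simp only [Set.mem_ofPred_eq, blockEvent, Fin.forall_iff, a']
    constructor
    · intro h i hi j hj
      simpa [hi] using h i (mem_range.1 (hI hi)) j hj
    · intro h i _ j hj
      split_ifs with hi
      exacts [h i hi j hj, trivial]
  have hprod : ∀ ω, ∏ i : Fin M, ∏ j : Fin N, (μ i ω (a' i j)).toReal
      = ∏ i ∈ I, ∏ j ∈ range N, (μ i ω (a i j)).toReal := by
    intro ω
    rw [Fin.prod_univ_eq_prod_range (fun i => ∏ j : Fin N, (μ i ω (a' i j)).toReal),
      ← prod_subset hI]
    · refine prod_congr rfl fun i hi => ?_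
      simp only [a', if_pos hi]
      exact Fin.prod_univ_eq_prod_range (fun j => (μ i ω (a i j)).toReal) N
    · intro i _ hi
      simp [a', hi]
  have hmeas : ∀ i j, MeasurableSet (a' i j) := fun i j => by
    dsimp only [a']
    split_ifs
    exacts [ha i j, .univ]
  simpa only [hevent, hprod] using hcond M N (fun i j => a' i j) fun i j => hmeas i j

lemma condExp_blockEvent_range_inter_Ico (hcond : IsDirectingRowLaws P ξ μ)
    (hμp : ∀ i ω, IsProbabilityMeasure (μ i ω)) (ha : ∀ i j, MeasurableSet (a i j))
    {m M : ℕ} (hmM : m ≤ M) :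
    P⟦blockEvent ξ (range m) N a ∩ blockEvent ξ (Ico m M) N a | rowLawsSigma μ M⟧
      =ᵐ[P] P⟦blockEvent ξ (range m) N a | rowLawsSigma μ m⟧
        * P⟦blockEvent ξ (Ico m M) N a | rowLawsSigma μ M⟧ := by
  have hunion : range m ∪ Ico m M = range M := by
    rw [range_eq_Ico, range_eq_Ico, Ico_union_Ico_eq_Ico (Nat.zero_le m) hmM]
  rw [blockEvent_union, hunion]
  filter_upwards [condExp_blockEvent (N := N) hcond hμp ha (subset_refl (range M)),
    condExp_blockEvent (N := N) hcond hμp ha (subset_refl (range m)),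
    condExp_blockEvent (N := N) hcond hμp ha (I := Ico m M) (M := M)
      fun i hi => mem_range.2 (mem_Ico.1 hi).2] with ω hM hm hmM'
  rw [Pi.mul_apply, hM, hm, hmM', prod_range_mul_prod_Ico _ hmM]

lemma indepGiven_blockEvents_lawBlockEvents [IsFiniteMeasure P]
    (hcond : IsDirectingRowLaws P ξ μ) (hμp : ∀ i ω, IsProbabilityMeasure (μ i ω))
    (hξ : ∀ i j, Measurable (ξ i j)) (hμ : ∀ i, Measurable (μ i)) {m M : ℕ} (hmM : m ≤ M) :
    ∀ E ∈ blockEvents ξ (range m) N, ∀ F ∈ lawBlockEvents μ ξ m M N,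
      IndepGiven (rowLawsSigma μ m) P E F := by
  rintro _ ⟨a, ha, rfl⟩ _ ⟨F, hF, _, ⟨b, hb, rfl⟩, rfl⟩
  -- one array for both blocks, so that their intersection is again a block event
  set c : ℕ → ℕ → Set S := fun i => if i < m then a i else b i
  have hc : ∀ i j, MeasurableSet (c i j) := fun i j => by
    dsimp only [c]
    split_ifs
    exacts [ha i j, hb i j]
  rw [blockEvent_congr (b := c) fun i hi => (if_pos (mem_range.1 hi)).symm,
    blockEvent_congr (b := c) fun i hi => (if_neg (not_lt.2 (mem_Ico.1 hi).1)).symm]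
  exact indepGiven_inter_of_condExp_inter_ae_eq (rowLawsSigma_mono hmM) (rowLawsSigma_le hμ M)
    (measurableSet_blockEvent hξ hc) (measurableSet_blockEvent hξ hc) hF
    (condExp_blockEvent_range_inter_Ico hcond hμp hc hmM)

end condExp

end RowArray

theorem stmt19_general {Ω S : Type*} [MeasurableSpace Ω]
    [MeasurableSpace S]
    (P : Measure Ω) [IsProbabilityMeasure P]
    (ξ : ℕ → ℕ → Ω → S) (hξ : ∀ i j, Measurable (ξ i j))
    (μ : ℕ → Ω → Measure S) (hμm : ∀ i, Measurable (μ i))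
    (hμp : ∀ i ω, IsProbabilityMeasure (μ i ω))
    -- conditionally on `μ₁,…,μ_m`, the entries of each `m × n` block are independent with
    -- `ξ_{ij} ∼ μ_i`
    (hcond : ∀ (m n : ℕ) (A : Fin m → Fin n → Set S), (∀ i j, MeasurableSet (A i j)) →
      P[Set.indicator {ω | ∀ (i : Fin m) (j : Fin n), ξ (i : ℕ) (j : ℕ) ω ∈ A i j}
          (fun _ => (1:ℝ)) |
          MeasurableSpace.comap (fun ω (i : Fin m) => μ (i : ℕ) ω) inferInstance]
        =ᵐ[P] fun ω => ∏ i : Fin m, ∏ j : Fin n, ((μ (i : ℕ) ω) (A i j)).toReal)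
    (m M N : ℕ) (hmM : m < M) :
    ∀ (A : Set (Fin m → Fin N → S)) (B : Set (Fin (M - m) → Measure S × (Fin N → S))),
      MeasurableSet A → MeasurableSet B →
      P[Set.indicator
          ((fun ω (i : Fin m) (j : Fin N) => ξ (i : ℕ) (j : ℕ) ω) ⁻¹' A ∩
            (fun ω (k : Fin (M - m)) =>
              (μ (m + (k : ℕ)) ω, fun j : Fin N => ξ (m + (k : ℕ)) (j : ℕ) ω)) ⁻¹' B)
          (fun _ => (1:ℝ)) |
          MeasurableSpace.comap (fun ω (i : Fin m) => μ (i : ℕ) ω) inferInstance]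
        =ᵐ[P] fun ω =>
          ((P[Set.indicator ((fun ω' (i : Fin m) (j : Fin N) => ξ (i : ℕ) (j : ℕ) ω') ⁻¹' A)
              (fun _ => (1:ℝ)) |
              MeasurableSpace.comap (fun ω' (i : Fin m) => μ (i : ℕ) ω') inferInstance]) ω) *
          ((P[Set.indicator
              ((fun ω' (k : Fin (M - m)) =>
                (μ (m + (k : ℕ)) ω', fun j : Fin N => ξ (m + (k : ℕ)) (j : ℕ) ω')) ⁻¹' B)
              (fun _ => (1:ℝ)) |
              MeasurableSpace.comap (fun ω' (i : Fin m) => μ (i : ℕ) ω') inferInstance]) ω) :=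
  fun _ _ hA hB => IndepGiven.of_isPiSystem (rowLawsSigma_le hμm m) isPiSystem_blockEvents
    isPiSystem_lawBlockEvents (fun _ => measurableSet_of_mem_blockEvents hξ)
    (fun _ => measurableSet_of_mem_lawBlockEvents hξ hμm)
    (indepGiven_blockEvents_lawBlockEvents hcond hμp hξ hμm hmM.le)
    (measurable_block_generateFrom_blockEvents hA)
    (measurable_rows_generateFrom_lawBlockEvents hB)

/-- Markov-type property: given `μ₁,…,μ_m`, the block `{ξ_{ij} : i ≤ m, j ≤ N}` and the
collection `{(μ_i, (ξ_{ij})_{j ≤ N}) : m < i ≤ M}` are conditionally independent. -/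
theorem stmt19 {Ω S : Type*} [MeasurableSpace Ω]
    [MetricSpace S] [CompleteSpace S] [SeparableSpace S] [MeasurableSpace S] [BorelSpace S]
    (P : Measure Ω) [IsProbabilityMeasure P]
    (ξ : ℕ → ℕ → Ω → S) (hξ : ∀ i j, Measurable (ξ i j))
    (hre : RowExchangeable P ξ)
    (μ : ℕ → Ω → Measure S) (hμm : ∀ i, Measurable (μ i))
    (hμp : ∀ i ω, IsProbabilityMeasure (μ i ω))
    -- conditionally on `μ₁,…,μ_m`, the entries of each `m × n` block are independent with
    -- `ξ_{ij} ∼ μ_i`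
    (hcond : ∀ (m n : ℕ) (A : Fin m → Fin n → Set S), (∀ i j, MeasurableSet (A i j)) →
      P[Set.indicator {ω | ∀ (i : Fin m) (j : Fin n), ξ (i : ℕ) (j : ℕ) ω ∈ A i j}
          (fun _ => (1:ℝ)) |
          MeasurableSpace.comap (fun ω (i : Fin m) => μ (i : ℕ) ω) inferInstance]
        =ᵐ[P] fun ω => ∏ i : Fin m, ∏ j : Fin n, ((μ (i : ℕ) ω) (A i j)).toReal)
    (m M N : ℕ) (hmM : m < M) :
    ∀ (A : Set (Fin m → Fin N → S)) (B : Set (Fin (M - m) → Measure S × (Fin N → S))),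
      MeasurableSet A → MeasurableSet B →
      P[Set.indicator
          ((fun ω (i : Fin m) (j : Fin N) => ξ (i : ℕ) (j : ℕ) ω) ⁻¹' A ∩
            (fun ω (k : Fin (M - m)) =>
              (μ (m + (k : ℕ)) ω, fun j : Fin N => ξ (m + (k : ℕ)) (j : ℕ) ω)) ⁻¹' B)
          (fun _ => (1:ℝ)) |
          MeasurableSpace.comap (fun ω (i : Fin m) => μ (i : ℕ) ω) inferInstance]
        =ᵐ[P] fun ω =>
          ((P[Set.indicator ((fun ω' (i : Fin m) (j : Fin N) => ξ (i : ℕ) (j : ℕ) ω') ⁻¹' A)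
              (fun _ => (1:ℝ)) |
              MeasurableSpace.comap (fun ω' (i : Fin m) => μ (i : ℕ) ω') inferInstance]) ω) *
          ((P[Set.indicator
              ((fun ω' (k : Fin (M - m)) =>
                (μ (m + (k : ℕ)) ω', fun j : Fin N => ξ (m + (k : ℕ)) (j : ℕ) ω')) ⁻¹' B)
              (fun _ => (1:ℝ)) |
              MeasurableSpace.comap (fun ω' (i : Fin m) => μ (i : ℕ) ω') inferInstance]) ω) :=
  stmt19_general P ξ hξ μ hμm hμp hcond m M N hmM
end
end
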